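/- arXiv:0809.4966 — 8 statements merged into one kernel-verified Lean document; each statement's English description precedes it below -/
import Mathlib

section
/- Fix integers n ≥ 1 and 0 ≤ k ≤ n, and set m = n − k. In ℤ[a_1,…,a_{n+k}], with the conventions a_0 = 1 and a_p = 0 for p < 0 or p > n+k, set d_r = det(a_{1+j−i})_{1≤i,j≤r} and b_r = a_r² + 2·∑_{i≥1} (−1)^i a_{r+i} a_{r−i}. Let I be the ideal generated by d_{m+1},…,d_{n+k} and b_{k+1},…,b_n. Then d_r ∈ I for every r with n+k < r ≤ 2n. -/
open MvPolynomial

/-- The element `a_p` of `ℤ[a_1,…,a_{n+k}]`, with the conventions `a_0 = 1` and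
`a_p = 0` for `p < 0` or `p > n+k`. -/
noncomputable def aGen (n k : ℕ) (p : ℤ) : MvPolynomial (Fin (n + k)) ℤ :=
  if h : 1 ≤ p ∧ p ≤ n + k then X ⟨p.toNat - 1, by omega⟩
  else if p = 0 then 1 else 0

/-- The `r × r` Schur determinant `d_r = det (a_{1+j-i})_{1 ≤ i,j ≤ r}`. -/
noncomputable def dDet (n k : ℕ) (r : ℕ) : MvPolynomial (Fin (n + k)) ℤ :=
  (Matrix.of fun i j : Fin r => aGen n k (1 + (j : ℤ) - (i : ℤ))).det

/-- `b_r = a_r² + 2·∑_{i ≥ 1} (−1)^i a_{r+i} a_{r−i}` (the sum is finite, and all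
nonzero terms occur for `1 ≤ i ≤ n+k`). -/
noncomputable def bRel (n k : ℕ) (r : ℕ) : MvPolynomial (Fin (n + k)) ℤ :=
  aGen n k r ^ 2 +
    2 * ∑ i ∈ Finset.Icc 1 (n + k),
      (-1 : MvPolynomial (Fin (n + k)) ℤ) ^ i * aGen n k (r + i) * aGen n k ((r : ℤ) - i)

/-! Write `A(t) = ∑ aₚ tᵖ` and `D(t) = ∑ d_r t^r`. Expanding `d_{r+1}` along its first row
gives `A(-t) D(t) = 1`, and `A(t) A(-t)` is an even series whose coefficient of `t^{2s}` is
`(-1)^s b_s`. Hence `A(t) = A(t) A(-t) · D(t)`, and for `r > n + k`, where `a_r = 0`, comparing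
coefficients of `t^r` gives `d_r = -∑_{s ≥ 1} (-1)^s b_s d_{r-2s}`. For `s > k` the factor `b_s`
is a generator of `I` because `s ≤ r/2 ≤ n`; for `s ≤ k` the index `r - 2s` exceeds `m`, so
`d_{r-2s}` is a generator or lies in `I` by induction on `r`. -/

open PowerSeries Finset

section Toeplitz

variable {R : Type*} [CommRing R]

noncomputable def toeplitzDet (a : ℤ → R) (r : ℕ) : R :=
  (Matrix.of fun i j : Fin r => a (1 + (j : ℤ) - (i : ℤ))).det

variable {a : ℤ → R}

lemma det_of_succAbove_sub (h0 : a 0 = 1) (hneg : ∀ p < 0, a p = 0) :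
    ∀ (r : ℕ) (j : Fin (r + 1)),
      (Matrix.of fun i j' : Fin r => a ((j.succAbove j' : ℤ) - i)).det = toeplitzDet a (r - j)
  | 0, _ => by rw [Matrix.det_fin_zero, Nat.zero_sub, toeplitzDet, Matrix.det_fin_zero]
  | r + 1, j => by
    induction j using Fin.cases with
    | zero =>
      simp only [toeplitzDet, Fin.zero_succAbove, Fin.val_succ, Fin.val_zero, Nat.sub_zero]
      congr 2
      ext i j
      push_cast
      ring_nf
    | succ j =>
      -- column `0` is `(1, 0, …, 0)ᵀ`, and the minor of its `1` has the same shape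
      rw [Matrix.det_succ_column_zero, Fin.sum_univ_succ, Finset.sum_eq_zero, add_zero]
      · rw [Fin.val_succ, Nat.add_sub_add_right, ← det_of_succAbove_sub h0 hneg r j]
        simp only [Matrix.of_apply, Fin.succ_succAbove_zero, Fin.val_zero, Nat.cast_zero,
          sub_zero, h0, pow_zero, one_mul]
        congr 1
        ext i j'
        simp only [Matrix.submatrix_apply, Matrix.of_apply, Fin.zero_succAbove,
          Fin.succ_succAbove_succ, Fin.val_succ]
        push_cast
        ring_nf
      · intro i _
        rw [Matrix.of_apply, Fin.succ_succAbove_zero, hneg _ (by simp; omega), mul_zero,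
          zero_mul]

lemma toeplitzDet_succ (h0 : a 0 = 1) (hneg : ∀ p < 0, a p = 0) (r : ℕ) :
    toeplitzDet a (r + 1) =
      ∑ j ∈ range (r + 1), (-1) ^ j * a ↑(j + 1) * toeplitzDet a (r - j) := by
  rw [toeplitzDet, Matrix.det_succ_row_zero, ← Fin.sum_univ_eq_sum_range]
  refine Fintype.sum_congr _ _ fun j => ?_
  rw [← det_of_succAbove_sub h0 hneg r j]
  congr 2
  · simp only [Matrix.of_apply, Fin.val_zero]
    push_cast; ring_nf
  · ext i j'
    simp only [Matrix.submatrix_apply, Matrix.of_apply, Fin.val_succ]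
    push_cast
    ring_nf

lemma rescale_neg_one_mul_mk_toeplitzDet (h0 : a 0 = 1) (hneg : ∀ p < 0, a p = 0) :
    rescale (-1) (mk fun p : ℕ => a p) * mk (toeplitzDet a) = 1 := by
  ext (_ | v)
  · simp [PowerSeries.coeff_mul, coeff_rescale, h0, toeplitzDet]
  · rw [PowerSeries.coeff_mul, Nat.sum_antidiagonal_succ,
      Nat.sum_antidiagonal_eq_sum_range_succ_mk]
    simp only [coeff_rescale, coeff_mk, PowerSeries.coeff_one, if_neg v.succ_ne_zero]
    rw [toeplitzDet_succ h0 hneg, pow_zero, Nat.cast_zero, h0, one_mul, one_mul,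
      ← sum_add_distrib]
    refine sum_eq_zero fun j _ => ?_
    ring

end Toeplitz

section EvenOddPart

variable {R : Type*} [CommRing R] (f : R⟦X⟧)

lemma coeff_odd_mul_rescale_neg_one_self (s : ℕ) :
    coeff (2 * s + 1) (f * rescale (-1) f) = 0 := by
  rw [PowerSeries.coeff_mul]
  refine sum_involution (fun pq _ => pq.swap) (fun ⟨p, q⟩ hpq => ?_)
    (fun ⟨p, q⟩ hpq _ => ?_)
    (fun pq hpq => by simpa [add_comm] using hpq) (fun _ _ => rfl)
  · rw [HasAntidiagonal.mem_antidiagonal] at hpq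
    simp only [Prod.swap, coeff_rescale]
    obtain ⟨hp, hq⟩ | ⟨hp, hq⟩ : Even p ∧ Odd q ∨ Odd p ∧ Even q := by
      simp only [Nat.even_iff, Nat.odd_iff]; omega
    · rw [hp.neg_one_pow, hq.neg_one_pow]; ring
    · rw [hp.neg_one_pow, hq.neg_one_pow]; ring
  · rw [HasAntidiagonal.mem_antidiagonal] at hpq
    simp only [Prod.swap, ne_eq, Prod.mk.injEq]
    omega

lemma coeff_even_mul_rescale_neg_one_self (s : ℕ) :
    coeff (2 * s) (f * rescale (-1) f) = (-1) ^ s * (coeff s f ^ 2 +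
      2 * ∑ i ∈ Icc 1 s, (-1) ^ i * coeff (s + i) f * coeff (s - i) f) := by
  set g : ℕ → R := fun p => coeff p f * ((-1) ^ (2 * s - p) * coeff (2 * s - p) f) with hg
  have hpair : ∀ i ∈ range s, g (s - 1 - i) + g (s + (i + 1)) =
      (-1) ^ s * 2 * ((-1) ^ (i + 1) * coeff (s + (i + 1)) f * coeff (s - (i + 1)) f) := by
    intro i hi
    obtain ⟨t, rfl⟩ : ∃ t, s = t + (i + 1) := ⟨s - (i + 1), by simp at hi; omega⟩
    simp only [hg, show t + (i + 1) - 1 - i = t by omega,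
      show 2 * (t + (i + 1)) - t = t + (i + 1) + (i + 1) by omega,
      show 2 * (t + (i + 1)) - (t + (i + 1) + (i + 1)) = t by omega, Nat.add_sub_cancel]
    have hsq : ((-1 : R) ^ (i + 1)) ^ 2 = 1 := by
      rw [← pow_mul, pow_mul', neg_one_sq, one_pow]
    linear_combination (-(coeff t f * coeff (t + (i + 1) + (i + 1)) f * (-1) ^ t)) * hsq
  have hcenter : g (s + 0) = (-1) ^ s * coeff s f ^ 2 := by
    simp only [hg, add_zero, show 2 * s - s = s by omega]
    ring
  rw [PowerSeries.coeff_mul, Nat.sum_antidiagonal_eq_sum_range_succ_mk]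
  simp only [coeff_rescale]
  change ∑ p ∈ range (2 * s + 1), g p = _
  rw [show 2 * s + 1 = s + (s + 1) by omega, sum_range_add, ← sum_range_reflect g s,
    sum_range_succ', hcenter, ← add_assoc, ← sum_add_distrib, sum_congr rfl hpair, ← mul_sum,
    ← Ico_add_one_right_eq_Icc, sum_Ico_eq_sum_range, Nat.add_sub_cancel]
  simp only [add_comm 1]
  ring

end EvenOddPart

lemma aGen_zero (n k : ℕ) : aGen n k 0 = 1 := by
  rw [aGen, dif_neg (by omega), if_pos rfl]

lemma aGen_of_neg (n k : ℕ) {p : ℤ} (hp : p < 0) : aGen n k p = 0 := by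
  rw [aGen, dif_neg (by omega), if_neg hp.ne]

lemma aGen_of_lt (n k : ℕ) {p : ℤ} (hp : (n + k : ℤ) < p) : aGen n k p = 0 := by
  rw [aGen, dif_neg (by omega), if_neg (by omega)]

lemma dDet_eq_toeplitzDet (n k : ℕ) : dDet n k = toeplitzDet (aGen n k) := rfl

noncomputable def aSeries (n k : ℕ) : PowerSeries (MvPolynomial (Fin (n + k)) ℤ) :=
  mk fun p : ℕ => aGen n k p

lemma neg_one_pow_mul_bRel (n k s : ℕ) :
    (-1) ^ s * bRel n k s = coeff (2 * s) (aSeries n k * rescale (-1) (aSeries n k)) := by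
  set t : ℕ → MvPolynomial (Fin (n + k)) ℤ :=
    fun i => (-1) ^ i * aGen n k (s + i) * aGen n k ((s : ℤ) - i) with ht
  have hs : ∑ i ∈ Icc 1 s, t i = ∑ i ∈ Icc 1 (s + (n + k)), t i :=
    sum_subset (Icc_subset_Icc_right (by omega)) fun i hi hi' => by
      simp only [mem_Icc, ht] at hi hi' ⊢
      rw [aGen_of_neg n k (p := s - i) (by omega), mul_zero]
  have hnk : ∑ i ∈ Icc 1 (n + k), t i = ∑ i ∈ Icc 1 (s + (n + k)), t i :=
    sum_subset (Icc_subset_Icc_right (by omega)) fun i hi hi' => by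
      simp only [mem_Icc, ht] at hi hi' ⊢
      rw [aGen_of_lt n k (by omega), mul_zero, zero_mul]
  rw [coeff_even_mul_rescale_neg_one_self, bRel]
  simp only [aSeries, coeff_mk]
  change _ * (_ + 2 * ∑ i ∈ Icc 1 (n + k), t i) = _
  have hcast : ∀ i ∈ Icc 1 s, t i = (-1) ^ i * aGen n k ↑(s + i) * aGen n k ↑(s - i) :=
    fun i hi => by push_cast [(mem_Icc.mp hi).2]; rfl
  rw [hnk, ← hs, sum_congr rfl hcast]

lemma aGen_eq_sum_antidiagonal (n k r : ℕ) :
    aGen n k r = ∑ p ∈ antidiagonal r,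
      coeff p.1 (aSeries n k * rescale (-1) (aSeries n k)) * dDet n k p.2 := by
  have h : aSeries n k = aSeries n k * rescale (-1) (aSeries n k) * mk (dDet n k) := by
    rw [mul_assoc, aSeries, dDet_eq_toeplitzDet,
      rescale_neg_one_mul_mk_toeplitzDet (aGen_zero n k) (fun _ => aGen_of_neg n k), mul_one]
  simpa [aSeries, PowerSeries.coeff_mul] using congrArg (coeff r) h

theorem dDet_mem_ideal_general (n k : ℕ) (r : ℕ)
    (hr₁ : n + k < r) (hr₂ : r ≤ 2 * n) :
    dDet n k r ∈ Ideal.span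
      (dDet n k '' Set.Icc (n - k + 1) (n + k) ∪ bRel n k '' Set.Icc (k + 1) n) := by
  induction r using Nat.strong_induction_on with
  | _ r ih =>
  set I := Ideal.span (dDet n k '' Set.Icc (n - k + 1) (n + k) ∪ bRel n k '' Set.Icc (k + 1) n)
  set C := aSeries n k * rescale (-1) (aSeries n k)
  obtain ⟨r, rfl⟩ : ∃ r', r = r' + 1 := ⟨r - 1, by omega⟩
  have hrec :
      dDet n k (r + 1) + ∑ p ∈ antidiagonal r, coeff (p.1 + 1) C * dDet n k p.2 = 0 := by
    have hC0 : coeff 0 C = 1 := by simp [C, aSeries, PowerSeries.coeff_mul, aGen_zero]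
    have hcoeff := aGen_eq_sum_antidiagonal n k (r + 1)
    rwa [aGen_of_lt n k (by omega), Nat.sum_antidiagonal_succ, hC0, one_mul, eq_comm] at hcoeff
  rw [eq_neg_of_add_eq_zero_left hrec]
  refine neg_mem (sum_mem fun ⟨u, v⟩ huv => ?_)
  rw [HasAntidiagonal.mem_antidiagonal] at huv
  obtain ⟨s, hs | hs⟩ := Nat.even_or_odd' (u + 1)
  · rw [hs, ← neg_one_pow_mul_bRel]
    by_cases hsk : s ≤ k
    · have hv : dDet n k v ∈ I := by
        by_cases hv : v ≤ n + k
        · exact Ideal.subset_span (Or.inl ⟨v, ⟨by omega, hv⟩, rfl⟩)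
        · exact ih v (by omega) (by omega) (by omega)
      exact I.mul_mem_left _ hv
    · exact I.mul_mem_right _ <| I.mul_mem_left _ <|
        Ideal.subset_span (Or.inr ⟨s, ⟨by omega, by omega⟩, rfl⟩)
  · rw [hs, coeff_odd_mul_rescale_neg_one_self, zero_mul]
    exact I.zero_mem

/-- With `m = n − k` and `I = (d_{m+1},…,d_{n+k}, b_{k+1},…,b_n)`, one has
`d_r ∈ I` for all `n+k < r ≤ 2n`. -/
theorem dDet_mem_ideal (n k : ℕ) (hn : 1 ≤ n) (hk : k ≤ n) (r : ℕ)
    (hr₁ : n + k < r) (hr₂ : r ≤ 2 * n) :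
    dDet n k r ∈ Ideal.span
      (dDet n k '' Set.Icc (n - k + 1) (n + k) ∪ bRel n k '' Set.Icc (k + 1) n) :=
  dDet_mem_ideal_general n k r hr₁ hr₂
end

section
/- Fix integers 0 ≤ k ≤ n and set m = n − k. The number of k-strict partitions λ with at most m nonzero parts and with λ_1 ≤ n+k equals 2^m · binom(n, k). -/
/-!
An antitone tuple is determined by the multiset of its entries, so the partitions in question
are the multisets of size `m` with entries at most `n + k` in which no entry `> k` repeats.
Such a multiset is the sum of an `r`-subset of `{k+1, …, n+k}` and an `(m - r)`-multiset of
`{0, …, k}`, and stars and bars counts the latter as `C(m - r + k, k) = C(n - r, k)`. Finally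
`C(n, r) C(n - r, k) = C(n, k) C(n - k, r)`, so summing over `r` gives `2 ^ (n - k) C(n, k)`.
-/

open Finset

namespace Nat

theorem choose_mul_choose_sub_comm (n k r : ℕ) :
    n.choose r * (n - r).choose k = n.choose k * (n - k).choose r := by
  have h₁ := Nat.choose_mul (n := n) (Nat.le_add_right r k)
  have h₂ := Nat.choose_mul (n := n) (Nat.le_add_left k r)
  rw [Nat.add_sub_cancel_left, Nat.choose_symm_add] at h₁
  rw [Nat.add_sub_cancel] at h₂
  rw [← h₁, h₂]

theorem sum_range_choose_mul_choose_sub (n k : ℕ) :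
    ∑ r ∈ range (n - k + 1), n.choose r * (n - r).choose k = 2 ^ (n - k) * n.choose k := by
  simp_rw [choose_mul_choose_sub_comm n k, ← mul_sum, Nat.sum_range_choose, mul_comm]

end Nat

section AntitoneTuple

variable {α : Type*} [LinearOrder α] {m : ℕ}

variable (α m) in
noncomputable def antitoneTupleEquivSym : {f : Fin m → α // Antitone f} ≃ Sym α m :=
  Equiv.ofBijective (fun f => ⟨List.ofFn f.1, by simp⟩) <| by
    constructor
    · rintro ⟨f, hf⟩ ⟨g, hg⟩ hfg
      have hperm : (List.ofFn f).Perm (List.ofFn g) :=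
        Multiset.coe_eq_coe.mp (congrArg Subtype.val hfg)
      exact Subtype.ext (List.ofFn_injective
        (hperm.eq_of_sortedGE hf.sortedGE_ofFn hg.sortedGE_ofFn))
    · intro s
      set l := s.1.sort (· ≥ ·)
      have hl : l.length = m := by simp [l, Multiset.length_sort]
      have hsorted : l.SortedGE := List.sortedGE_iff_pairwise.mpr (Multiset.pairwise_sort _ _)
      refine ⟨⟨fun i => l.get (i.cast hl.symm),
        hsorted.antitone_get.comp_monotone fun _ _ h => h⟩, Subtype.ext ?_⟩
      change ((List.ofFn fun i => l.get (i.cast hl.symm) : List α) : Multiset α) = s.1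
      rw [← List.ofFn_congr hl, List.ofFn_get, Multiset.sort_eq]

theorem Antitone.injOn_lt_iff {f : Fin m → α} (hf : Antitone f) (k : α) :
    Set.InjOn f {i | k < f i} ↔ ∀ i j : Fin m, (i : ℕ) + 1 = j → k < f i → f j < f i := by
  constructor
  · intro hinj i j hij hki
    refine (hf (Fin.le_def.mpr (by omega))).lt_of_ne fun hji => ?_
    have := hinj (show k < f j by rwa [hji]) hki hji
    omega
  · intro hstep i hi j hj hij
    by_contra hne
    wlog hlt : i < j generalizing i j
    · exact this hj hi hij.symm (Ne.symm hne) (lt_of_le_of_ne (not_lt.mp hlt) (Ne.symm hne))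
    have hsucc : (i : ℕ) + 1 < m := by omega
    have hle : f j ≤ f ⟨i + 1, hsucc⟩ := hf (Fin.le_def.mpr (by simp only; omega))
    exact (hle.trans_lt (hstep i _ rfl hi)).ne' hij

theorem nodup_filter_ofFn_iff_injOn (f : Fin m → α) (k : α) :
    (Multiset.filter (k < ·) (List.ofFn f : Multiset α)).Nodup ↔ Set.InjOn f {i | k < f i} := by
  rw [← Fin.univ_val_map, Multiset.filter_map,
    Multiset.nodup_map_iff_inj_on (Multiset.Nodup.filter _ univ.nodup)]
  simp [Set.InjOn]

end AntitoneTuple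

theorem filter_lt_add_map_val {k : ℕ} {T : Multiset ℕ} (hT : ∀ x ∈ T, k < x)
    (u : Multiset (Fin (k + 1))) :
    Multiset.filter (k < ·) (T + u.map Fin.val) = T ∧
      Multiset.filter (¬ k < ·) (T + u.map Fin.val) = u.map Fin.val := by
  have hsmall : ∀ x ∈ u.map Fin.val, ¬ k < x := by
    simp only [Multiset.mem_map]
    rintro _ ⟨i, -, rfl⟩
    have := i.2
    omega
  simp only [Multiset.filter_add, Multiset.filter_eq_self.mpr hT,
    Multiset.filter_eq_nil.mpr hsmall, Multiset.filter_eq_self.mpr hsmall,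
    (Multiset.filter_eq_nil (p := (¬ k < ·))).mpr fun x hx => not_not.mpr (hT x hx),
    add_zero, zero_add, and_self]

/-- A partition with at most `m` parts, padded with zeros to exactly `m` parts. -/
def KStrictSym (n k m : ℕ) : Type :=
  {s : Sym ℕ m // (∀ x ∈ s, x ≤ n + k) ∧ (Multiset.filter (k < ·) (s : Multiset ℕ)).Nodup}

namespace KStrictSym

variable {n k m : ℕ}

def bigPartCount (s : KStrictSym n k m) : Fin (m + 1) :=
  ⟨Multiset.card (Multiset.filter (k < ·) (s.1 : Multiset ℕ)),
    Nat.lt_succ_of_le ((Multiset.card_le_card (Multiset.filter_le _ _)).trans_eq s.1.2)⟩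

def ofParts (r : Fin (m + 1))
    (p : ↥(powersetCard r (Ioc k (n + k))) × Sym (Fin (k + 1)) (m - r)) :
    {s : KStrictSym n k m // s.bigPartCount = r} :=
  have hT := mem_powersetCard.mp p.1.2
  have hsplit := filter_lt_add_map_val (fun x hx => (mem_Ioc.mp (hT.1 hx)).1)
    (p.2 : Multiset (Fin (k + 1)))
  ⟨⟨⟨p.1.1.val + (p.2 : Multiset (Fin (k + 1))).map Fin.val, by
      rw [Multiset.card_add, Multiset.card_map, Finset.card_val, hT.2, Sym.card_coe]
      omega⟩, by
      intro x hx
      rcases Multiset.mem_add.mp hx with hx | hx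
      · exact (mem_Ioc.mp (hT.1 hx)).2
      · obtain ⟨i, -, rfl⟩ := Multiset.mem_map.mp hx
        have := i.2
        omega, by
      change (Multiset.filter _ (_ + _)).Nodup
      rw [hsplit.1]
      exact p.1.1.nodup⟩, Fin.ext <| by
    change Multiset.card (Multiset.filter _ (_ + _)) = _
    rw [hsplit.1]
    exact hT.2⟩

theorem ofParts_bijective (r : Fin (m + 1)) :
    Function.Bijective (ofParts (n := n) (k := k) r) := by
  constructor
  · rintro ⟨T, u⟩ ⟨T', u'⟩ h
    have hs : T.1.val + (u : Multiset (Fin (k + 1))).map Fin.val =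
        T'.1.val + (u' : Multiset (Fin (k + 1))).map Fin.val :=
      congrArg (fun s => (s.1.1 : Multiset ℕ)) h
    have hsplit := filter_lt_add_map_val
      (fun x hx => (mem_Ioc.mp ((mem_powersetCard.mp T.2).1 hx)).1) (u : Multiset (Fin (k + 1)))
    have hsplit' := filter_lt_add_map_val
      (fun x hx => (mem_Ioc.mp ((mem_powersetCard.mp T'.2).1 hx)).1) (u' : Multiset (Fin (k + 1)))
    have hT : T = T' := Subtype.ext (Finset.val_inj.mp (by rw [← hsplit.1, hs, hsplit'.1]))
    have hu : u = u' := Sym.coe_injective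
      (Multiset.map_injective Fin.val_injective (by rw [← hsplit.2, hs, hsplit'.2]))
    rw [hT, hu]
  · rintro ⟨⟨s, hbound, hnodup⟩, hr⟩
    have hr' : Multiset.card (Multiset.filter (k < ·) (s : Multiset ℕ)) = r := congrArg Fin.val hr
    have hsmall : ∀ x ∈ Multiset.filter (¬ k < ·) (s : Multiset ℕ), x < k + 1 := fun x hx => by
      have := (Multiset.mem_filter.mp hx).2
      omega
    have hcard := congrArg Multiset.card (Multiset.filter_add_not (k < ·) (s : Multiset ℕ))
    rw [Multiset.card_add, hr', Sym.card_coe] at hcard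
    refine ⟨(⟨⟨_, hnodup⟩, mem_powersetCard.mpr ⟨fun x hx => ?_, hr'⟩⟩,
      ⟨(Multiset.filter (¬ k < ·) (s : Multiset ℕ)).pmap (fun x hx => ⟨x, hx⟩) hsmall, ?_⟩), ?_⟩
    · have hx := Multiset.mem_filter.mp hx
      exact mem_Ioc.mpr ⟨hx.2, hbound x hx.1⟩
    · rw [Multiset.card_pmap]
      omega
    · refine Subtype.ext (Subtype.ext (Sym.coe_injective ?_))
      change _ + Multiset.map _ (Multiset.pmap _ _ _) = _
      rw [Multiset.map_pmap, Multiset.pmap_eq_map, Multiset.map_id']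
      exact Multiset.filter_add_not _ _

variable (n k m) in
theorem natCard_eq_sum :
    Nat.card (KStrictSym n k m) = ∑ r : Fin (m + 1), n.choose r * (k + (m - r)).choose k := by
  rw [Nat.card_congr ((Equiv.sigmaFiberEquiv bigPartCount).symm.trans
    (Equiv.sigmaCongrRight fun r => (Equiv.ofBijective _ (ofParts_bijective r)).symm)),
    Nat.card_sigma]
  refine Finset.sum_congr rfl fun r _ => ?_
  rw [Nat.card_prod, Sym.natCard_sym_eq_choose, Nat.card_eq_fintype_card, Fintype.card_coe,
    card_powersetCard, Nat.card_Ioc, Nat.card_eq_fintype_card, Fintype.card_fin,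
    Nat.add_sub_cancel, Nat.add_right_comm, Nat.add_sub_cancel, Nat.choose_symm_add]

end KStrictSym

noncomputable def kStrictTupleEquivSym (n k m : ℕ) :
    {f : Fin m → ℕ // (∀ i j : Fin m, i ≤ j → f j ≤ f i) ∧ (∀ i : Fin m, f i ≤ n + k) ∧
      (∀ i j : Fin m, (i : ℕ) + 1 = (j : ℕ) → k < f i → f j < f i)} ≃ KStrictSym n k m :=
  (Equiv.subtypeSubtypeEquivSubtypeInter (fun f => Antitone f) _).symm.trans <|
    (antitoneTupleEquivSym ℕ m).subtypeEquiv fun f => by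
      refine and_congr ?_ ?_
      · change _ ↔ ∀ x ∈ (List.ofFn f.1 : Multiset ℕ), x ≤ n + k
        simp only [Multiset.mem_coe, List.forall_mem_ofFn_iff]
      · change _ ↔ (Multiset.filter _ (List.ofFn f.1 : Multiset ℕ)).Nodup
        rw [nodup_filter_ofFn_iff_injOn, f.2.injOn_lt_iff]

/-- **Rank of `H^*(IG(n−k,2n))` as a count of `k`-strict partitions.**
With `m = n − k`, the number of `k`-strict partitions with at most `m` nonzero
parts and largest part at most `n+k` (represented as weakly decreasing functions
`Fin m → ℕ`) equals `2^m · binom(n,k)`. -/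
theorem card_kStrict_partitions (n k : ℕ) (hk : k ≤ n) :
    Nat.card {f : Fin (n - k) → ℕ //
        (∀ i j : Fin (n - k), i ≤ j → f j ≤ f i) ∧
        (∀ i : Fin (n - k), f i ≤ n + k) ∧
        (∀ i j : Fin (n - k), (i : ℕ) + 1 = (j : ℕ) → k < f i → f j < f i)} =
      2 ^ (n - k) * n.choose k := by
  rw [Nat.card_congr (kStrictTupleEquivSym n k (n - k)), KStrictSym.natCard_eq_sum,
    ← Nat.sum_range_choose_mul_choose_sub, ← Fin.sum_univ_eq_sum_range]
  refine Finset.sum_congr rfl fun r _ => ?_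
  have hr := r.2
  rw [show k + (n - k - r) = n - r by omega]
end

section
/- Fix integers 0 ≤ m ≤ n and set k = n − m. The map sending an index set P = {p_1 < ⋯ < p_m} ⊆ {1,…,2n} to the sequence λ(P) = (λ_1,…,λ_m) defined by λ_j = n+k+1−p_j + #{i < j : p_i + p_j > 2n+1} is a bijection from the set of all index sets onto 𝒫(k,n), the set of k-strict partitions contained in an m × (n+k) rectangle. In particular, for every index set P the sequence λ(P) is a weakly decreasing sequence of non-negative integers in which no part greater than k is repeated, with λ_1 ≤ n+k. -/
/-!
Write `c x = 2n+1-x`. If `p_j ≤ n` the correction term vanishes; if `p_j > n` it counts the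
earlier `p_i` in `(c p_j, p_j)`. An index set meets each pair `{x, c x}` at most once, so
`x ↦ min x (c x)` is injective on it, and counting its values gives `0 ≤ λ_j ≤ n+k`, with
`λ_j ≤ k` when `p_j > n`. Replacing `p_j` by a larger `q` lowers `λ_j` strictly; this gives both
the weak decrease of `λ` and injectivity (compare two index sets at the first place they differ).
Surjectivity is by induction on `m`: deleting `p_1` and `c p_1` from `{1,…,2n}` and renumbering
the rest in order turns the other `p_j` into an index set for `n-1` whose sequence is
`(λ_2,…,λ_m)`.
-/

open Finset

def indexSets (n m : ℕ) : Set (Fin m → ℕ) :=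
  {P | StrictMono P ∧ (∀ j, 1 ≤ P j ∧ P j ≤ 2 * n) ∧ ∀ i j, P i + P j ≠ 2 * n + 1}

/-- The set `𝒫(k,n)`, as sequences of length `m`. -/
def kStrictPartitions (k n m : ℕ) : Set (Fin m → ℤ) :=
  {lam | (∀ i j : Fin m, i ≤ j → lam j ≤ lam i) ∧ (∀ j, 0 ≤ lam j ∧ lam j ≤ (n + k : ℤ)) ∧
    ∀ i j : Fin m, (i : ℕ) + 1 = (j : ℕ) → (k : ℤ) < lam i → lam j < lam i}

def pairCount {m : ℕ} (n : ℕ) (P : Fin m → ℕ) (j : Fin m) : ℕ :=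
  #{i | i < j ∧ 2 * n + 1 < P i + P j}

def toPartition {m : ℕ} (n k : ℕ) (P : Fin m → ℕ) (j : Fin m) : ℤ :=
  (n + k + 1 : ℤ) - P j + pairCount n P j

section PairCount

variable {n m : ℕ} {P : Fin m → ℕ} {j j' : Fin m}

lemma pairCount_eq_zero (hP : StrictMono P) (hj : P j ≤ n) : pairCount n P j = 0 := by
  refine card_eq_zero.2 (filter_eq_empty_iff.2 ?_)
  rintro i - ⟨hij, hsum⟩
  have := hP hij
  omega

lemma injective_min_compl (hP : P ∈ indexSets n m) :
    Function.Injective fun i => min (P i) (2 * n + 1 - P i) := by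
  intro i i' h
  have := hP.2.1 i
  have := hP.2.1 i'
  have := hP.2.2 i i'
  exact hP.1.injective (by simp only at h; omega)

lemma pairCount_add_lt (hP : P ∈ indexSets n m) (hj : n < P j) : pairCount n P j + n < P j := by
  have hcard : pairCount n P j ≤ #(Icc (2 * n + 2 - P j) n) := by
    refine card_le_card_of_injOn _ (fun i hi => ?_) (injective_min_compl hP).injOn
    simp only [coe_filter, mem_univ, true_and, Set.mem_ofPred_eq] at hi
    have := hP.1 hi.1
    simp only [coe_Icc, Set.mem_Icc]
    omega
  rw [Nat.card_Icc] at hcard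
  have := (hP.2.1 j).2
  omega

lemma le_pairCount_add (hP : P ∈ indexSets n m) (hj : n < P j) :
    m + P j ≤ 2 * n + 1 + pairCount n P j := by
  have hcard : #{i | ¬(i < j ∧ 2 * n + 1 < P i + P j)} ≤ #(Icc 1 (2 * n + 1 - P j)) := by
    refine card_le_card_of_injOn _ (fun i hi => ?_) (injective_min_compl hP).injOn
    simp only [coe_filter, mem_univ, true_and, Set.mem_ofPred_eq, not_and, not_lt] at hi
    have := hP.2.1 i
    have := hP.2.2 i j
    simp only [coe_Icc, Set.mem_Icc]
    rcases lt_trichotomy i j with h | rfl | h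
    · have := hi h; omega
    · omega
    · have := hP.1 h; omega
  have := card_filter_add_card_filter_not (s := univ) fun i => i < j ∧ 2 * n + 1 < P i + P j
  rw [card_univ, Fintype.card_fin] at this
  rw [Nat.card_Icc] at hcard
  have := (hP.2.1 j).2
  unfold pairCount
  omega

lemma card_filter_add_lt (hP : P ∈ indexSets n m) {q : ℕ} (hq : P j < q) :
    #{i | i < j ∧ 2 * n + 1 < P i + q} + P j < pairCount n P j + q := by
  have hsplit : ({i | i < j ∧ 2 * n + 1 < P i + q} : Finset (Fin m)) ⊆
      ({i | i < j ∧ 2 * n + 1 < P i + P j} : Finset (Fin m)) ∪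
        ({i | 2 * n + 1 < P i + q ∧ P i + P j < 2 * n + 1} : Finset (Fin m)) := by
    intro i
    have := hP.2.2 i j
    simp only [mem_filter, mem_univ, true_and, mem_union]
    omega
  have hrest : #{i | 2 * n + 1 < P i + q ∧ P i + P j < 2 * n + 1} ≤
      #(Ioo (2 * n + 1 - q) (2 * n + 1 - P j)) := by
    refine card_le_card_of_injOn P (fun i hi => ?_) hP.1.injective.injOn
    simp only [coe_filter, mem_univ, true_and, Set.mem_ofPred_eq] at hi
    have := (hP.2.1 i).1
    simp only [coe_Ioo, Set.mem_Ioo]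
    omega
  rw [Nat.card_Ioo] at hrest
  have := (card_le_card hsplit).trans (card_union_le _ _)
  unfold pairCount
  omega

lemma pairCount_le_of_succ_eq (hjj' : (j : ℕ) + 1 = j') :
    pairCount n P j' ≤ #{i | i < j ∧ 2 * n + 1 < P i + P j'} + 1 := by
  refine (card_le_card fun i => ?_).trans (card_insert_le j _)
  simp only [mem_filter, mem_univ, true_and, mem_insert, Fin.lt_def, Fin.ext_iff]
  omega

lemma pairCount_add_lt_of_succ_eq (hP : StrictMono P) (hj : P j ≤ n)
    (hjj' : (j : ℕ) + 1 = j') : pairCount n P j' + P j < P j' := by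
  have hcard : pairCount n P j' ≤ #(Icc (2 * n + 2 - P j') (P j)) := by
    refine card_le_card_of_injOn P (fun i hi => ?_) hP.injective.injOn
    simp only [coe_filter, mem_univ, true_and, Set.mem_ofPred_eq] at hi
    have : P i ≤ P j := hP.monotone (Fin.le_def.2 (by have := Fin.lt_def.1 hi.1; omega))
    simp only [coe_Icc, Set.mem_Icc]
    omega
  rw [Nat.card_Icc] at hcard
  have := hP (Fin.lt_def.2 (by omega) : j < j')
  omega

end PairCount

section MapsTo

variable {n m k : ℕ} {P : Fin m → ℕ} {j j' : Fin m}

lemma toPartition_le_of_lt (hP : P ∈ indexSets n m) (hj : n < P j) : toPartition n k P j ≤ k := by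
  have := pairCount_add_lt hP hj
  unfold toPartition
  omega

lemma toPartition_nonneg (hmk : m + k = n) (hP : P ∈ indexSets n m) (j : Fin m) :
    0 ≤ toPartition n k P j := by
  unfold toPartition
  rcases le_or_gt (P j) n with hj | hj
  · have := (hP.2.1 j).1
    omega
  · have := le_pairCount_add hP hj
    omega

lemma toPartition_le (hP : P ∈ indexSets n m) (j : Fin m) : toPartition n k P j ≤ n + k := by
  rcases le_or_gt (P j) n with hj | hj
  · have := pairCount_eq_zero hP.1 hj
    have := (hP.2.1 j).1
    unfold toPartition
    omega
  · have := toPartition_le_of_lt (k := k) hP hj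
    omega

lemma toPartition_le_of_succ_eq (hP : P ∈ indexSets n m) (hjj' : (j : ℕ) + 1 = j') :
    toPartition n k P j' ≤ toPartition n k P j := by
  have := pairCount_le_of_succ_eq (n := n) (P := P) hjj'
  have := card_filter_add_lt hP (hP.1 (Fin.lt_def.2 (by omega) : j < j'))
  unfold toPartition
  omega

lemma toPartition_lt_of_succ_eq (hP : P ∈ indexSets n m) (hjj' : (j : ℕ) + 1 = j')
    (hk : k < toPartition n k P j) : toPartition n k P j' < toPartition n k P j := by
  have hj : P j ≤ n := by
    by_contra! hj
    exact (toPartition_le_of_lt hP hj).not_gt hk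
  have := pairCount_add_lt_of_succ_eq hP.1 hj hjj'
  have := pairCount_eq_zero hP.1 hj
  unfold toPartition
  omega

lemma Fin.antitone_of_adjacent {α : Type*} [Preorder α] {f : Fin m → α}
    (hf : ∀ i j : Fin m, (i : ℕ) + 1 = j → f j ≤ f i) : Antitone f := by
  cases m with
  | zero => exact fun i => i.elim0
  | succ m => exact Fin.antitone_iff_succ_le.2 fun i => hf _ _ (by simp)

lemma mapsTo_toPartition (hmk : m + k = n) :
    Set.MapsTo (toPartition n k) (indexSets n m) (kStrictPartitions k n m) := fun _ hP =>
  ⟨fun _ _ hij => Fin.antitone_of_adjacent (fun _ _ => toPartition_le_of_succ_eq hP) hij,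
    fun j => ⟨toPartition_nonneg hmk hP j, toPartition_le hP j⟩,
    fun _ _ => toPartition_lt_of_succ_eq hP⟩

end MapsTo

section InjOn

variable {n m k : ℕ} {P Q : Fin m → ℕ} {j : Fin m}

lemma toPartition_lt_of_lt (hP : P ∈ indexSets n m) (hPQ : ∀ i < j, P i = Q i)
    (hlt : P j < Q j) : toPartition n k Q j < toPartition n k P j := by
  have hQ : pairCount n Q j = #{i | i < j ∧ 2 * n + 1 < P i + Q j} := by
    unfold pairCount
    congr 1
    exact filter_congr fun i _ => and_congr_right fun hi => by rw [hPQ i hi]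
  have := card_filter_add_lt hP hlt
  unfold toPartition
  omega

lemma injOn_toPartition : Set.InjOn (toPartition n k) (indexSets n m) := by
  intro P hP Q hQ h
  funext j
  induction j using WellFoundedLT.induction with
  | _ j ih =>
    rcases lt_trichotomy (P j) (Q j) with hlt | heq | hgt
    · exact absurd (congrFun h j) (toPartition_lt_of_lt hP ih hlt).ne'
    · exact heq
    · exact absurd (congrFun h j) (toPartition_lt_of_lt hQ (fun i hi => (ih i hi).symm) hgt).ne

end InjOn

section SkipPair

/-- For `1 ≤ a < b`, an order isomorphism from `{1, 2, …}` onto `{1, 2, …} \ {a, b}`. -/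
def skipPair (a b q : ℕ) : ℕ := if q < a then q else if q + 1 < b then q + 1 else q + 2

variable {a b p q q' N : ℕ}

lemma strictMono_skipPair : StrictMono (skipPair a b) := fun q q' h => by
  unfold skipPair; split_ifs <;> omega

lemma le_skipPair : q ≤ skipPair a b q := by unfold skipPair; split_ifs <;> omega

lemma skipPair_le : skipPair a b q ≤ q + 2 := by unfold skipPair; split_ifs <;> omega

lemma skipPair_ne_left : skipPair a b q ≠ a := by
  unfold skipPair; split_ifs <;> omega

lemma skipPair_ne_right (hab : a < b) : skipPair a b q ≠ b := by
  unfold skipPair; split_ifs <;> omega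

lemma lt_skipPair_left (h : a ≤ q) : a < skipPair a b q := by
  unfold skipPair; split_ifs <;> omega

lemma lt_skipPair_right (hab : a < b) (h : b ≤ q + 1) : b < skipPair a b q := by
  unfold skipPair; split_ifs <;> omega

lemma skipPair_eq_of_lt (hab : a < b) (hs : a + b = N) (hp : p = a ∨ p = b)
    (h : p < skipPair a b q) : skipPair a b q = q + 1 + if N < p + skipPair a b q then 1 else 0 := by
  unfold skipPair at *; split_ifs at * <;> omega

variable {n : ℕ}

lemma skipPair_add_lt_iff (hab : a < b) (hs : a + b = 2 * (n + 1) + 1) :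
    2 * (n + 1) + 1 < skipPair a b q + skipPair a b q' ↔ 2 * n + 1 < q + q' := by
  unfold skipPair; split_ifs <;> omega

lemma skipPair_add_ne (hab : a < b) (hs : a + b = 2 * (n + 1) + 1) (hq : q + q' ≠ 2 * n + 1) :
    skipPair a b q + skipPair a b q' ≠ 2 * (n + 1) + 1 := by
  unfold skipPair; split_ifs <;> omega

end SkipPair

section Cons

variable {n m k a b p : ℕ} {P : Fin m → ℕ}

lemma pairCount_zero (P : Fin (m + 1) → ℕ) : pairCount n P 0 = 0 :=
  card_eq_zero.2 (filter_eq_empty_iff.2 fun i _ h => Fin.not_lt_zero i h.1)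

lemma pairCount_cons_succ (P : Fin m → ℕ) (j : Fin m) :
    pairCount n (Fin.cons p P : Fin (m + 1) → ℕ) j.succ =
      (if 2 * n + 1 < p + P j then 1 else 0) + pairCount n P j := by
  unfold pairCount
  rw [card_filter, card_filter, Fin.sum_univ_succ]
  simp [Fin.succ_pos]

lemma pairCount_skipPair_comp (hab : a < b) (hs : a + b = 2 * (n + 1) + 1) (j : Fin m) :
    pairCount (n + 1) (skipPair a b ∘ P) j = pairCount n P j := by
  unfold pairCount
  congr 1
  exact filter_congr fun i _ => and_congr_right fun _ => skipPair_add_lt_iff hab hs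

variable (hab : a < b) (hs : a + b = 2 * (n + 1) + 1) (hp : p = a ∨ p = b)
include hab hs hp

lemma cons_skipPair_mem_indexSets (ha : 0 < a) (hP : P ∈ indexSets n m)
    (hlt : ∀ i, p < skipPair a b (P i)) :
    (Fin.cons p (skipPair a b ∘ P) : Fin (m + 1) → ℕ) ∈ indexSets (n + 1) (m + 1) := by
  refine ⟨Fin.strictMono_cons.2 ⟨hlt, strictMono_skipPair.comp hP.1⟩, fun j => ?_, fun i j => ?_⟩
  · refine Fin.cases (by simp only [Fin.cons_zero]; omega) (fun j => ?_) j
    have := hP.2.1 j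
    have : P j ≤ skipPair a b (P j) := le_skipPair
    have : skipPair a b (P j) ≤ P j + 2 := skipPair_le
    simp only [Fin.cons_succ, Function.comp_apply]
    omega
  · have hne : ∀ j, p + skipPair a b (P j) ≠ 2 * (n + 1) + 1 := fun j => by
      have := skipPair_ne_left (a := a) (b := b) (q := P j)
      have := skipPair_ne_right (q := P j) hab
      omega
    induction i using Fin.cases <;> induction j using Fin.cases <;>
      simp only [Fin.cons_zero, Fin.cons_succ, Function.comp_apply]
    · omega
    · exact hne _
    · exact add_comm p _ ▸ hne _
    · exact skipPair_add_ne hab hs (hP.2.2 _ _)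

lemma toPartition_cons_skipPair (P : Fin m → ℕ) (hlt : ∀ i, p < skipPair a b (P i)) :
    toPartition (n + 1) k (Fin.cons p (skipPair a b ∘ P) : Fin (m + 1) → ℕ) =
      Fin.cons ((n + 1 + k + 1 : ℤ) - p) (toPartition n k P) := by
  funext j
  induction j using Fin.cases with
  | zero => simp [toPartition, pairCount_zero]
  | succ j =>
    have := skipPair_eq_of_lt hab hs hp (hlt j)
    simp only [toPartition, Fin.cons_succ, pairCount_cons_succ, Function.comp_apply,
      pairCount_skipPair_comp hab hs]
    split_ifs at * <;> push_cast <;> omega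

end Cons

section Surj

variable {n m k : ℕ} {lam : Fin m → ℤ}

lemma lt_of_mem_kStrictPartitions (hlam : lam ∈ kStrictPartitions k n m) {i j : Fin m}
    (hij : i < j) (hk : k < lam i) : lam j < lam i :=
  calc lam j ≤ lam ⟨i + 1, by omega⟩ := hlam.1 _ _ (Fin.le_def.2 (by simp; omega))
    _ < lam i := hlam.2.2 _ _ rfl hk

lemma tail_mem_kStrictPartitions {lam : Fin (m + 1) → ℤ}
    (hlam : lam ∈ kStrictPartitions k (n + 1) (m + 1)) :
    Fin.tail lam ∈ kStrictPartitions k n m := by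
  refine ⟨fun i j hij => hlam.1 _ _ (Fin.succ_le_succ_iff.2 hij), fun j => ⟨(hlam.2.1 _).1, ?_⟩,
    fun i j hij => hlam.2.2 _ _ (by simp [hij])⟩
  have := hlam.2.1 0
  have := hlam.1 0 j.succ (Fin.zero_le _)
  have := lt_of_mem_kStrictPartitions hlam (Fin.succ_pos j)
  simp only [Fin.tail]
  push_cast at *
  omega

lemma exists_toPartition_eq (hmk : m + k = n) (hlam : lam ∈ kStrictPartitions k n m) :
    ∃ P ∈ indexSets n m, toPartition n k P = lam := by
  induction m generalizing n with
  | zero => exact ⟨Fin.elim0, ⟨fun i => i.elim0, fun i => i.elim0, fun i => i.elim0⟩,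
      funext fun j => j.elim0⟩
  | succ m ih =>
    obtain ⟨n, rfl⟩ : ∃ n', n = n' + 1 := ⟨n - 1, by omega⟩
    obtain ⟨P, hP, hPlam⟩ := ih (by omega) (tail_mem_kStrictPartitions hlam)
    have hlam0 := hlam.2.1 0
    obtain ⟨p, hp⟩ : ∃ p : ℕ, (p : ℤ) = n + 1 + k + 1 - lam 0 := ⟨_, Int.toNat_of_nonneg (by omega)⟩
    set a := min p (2 * (n + 1) + 1 - p)
    set b := max p (2 * (n + 1) + 1 - p)
    have hab : a < b := by omega
    have hs : a + b = 2 * (n + 1) + 1 := by omega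
    have hpab : p = a ∨ p = b := by omega
    have hlt : ∀ i, p < skipPair a b (P i) := fun i => by
      have hi : toPartition n k P i = lam i.succ := congrFun hPlam i
      unfold toPartition at hi
      rcases lt_or_ge (k : ℤ) (lam 0) with hk | hk
      · have := lt_of_mem_kStrictPartitions hlam (Fin.succ_pos i) hk
        rw [show p = a by omega]
        exact lt_skipPair_left (by omega)
      · have := hlam.1 0 i.succ (Fin.zero_le _)
        rw [show p = b by omega]
        exact lt_skipPair_right hab (by omega)
    refine ⟨_, cons_skipPair_mem_indexSets hab hs hpab (by omega) hP hlt, ?_⟩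
    rw [toPartition_cons_skipPair hab hs hpab P hlt, hPlam, ← Fin.cons_self_tail lam]
    congr 1
    omega

end Surj

/-- **Index sets biject with `k`-strict partitions.**  With `m + k = n`, the map
sending an index set `P = {p_1 < ⋯ < p_m} ⊆ {1,…,2n}` (with `p_i + p_j ≠ 2n+1`)
to `λ_j = n+k+1−p_j + #{i < j : p_i + p_j > 2n+1}` is a bijection onto the set
`𝒫(k,n)` of `k`-strict partitions contained in an `m × (n+k)` rectangle. -/
theorem indexSet_partition_bijection (n m k : ℕ) (hmk : m + k = n) :
    Set.BijOn
      (fun (P : Fin m → ℕ) (j : Fin m) =>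
        (n + k + 1 : ℤ) - P j +
          ((Finset.univ.filter
            fun i : Fin m => i < j ∧ 2 * n + 1 < P i + P j).card : ℤ))
      {P : Fin m → ℕ | StrictMono P ∧ (∀ j, 1 ≤ P j ∧ P j ≤ 2 * n) ∧
        ∀ i j, P i + P j ≠ 2 * n + 1}
      {lam : Fin m → ℤ | (∀ i j : Fin m, i ≤ j → lam j ≤ lam i) ∧
        (∀ j, 0 ≤ lam j ∧ lam j ≤ (n + k : ℤ)) ∧
        (∀ i j : Fin m, (i : ℕ) + 1 = (j : ℕ) → (k : ℤ) < lam i → lam j < lam i)} :=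
  ⟨mapsTo_toPartition hmk, injOn_toPartition, fun _ hlam => exists_toPartition_eq hmk hlam⟩
end

section
/- Fix integers 0 ≤ m ≤ n and set k = n − m. Let P = {p_1 < ⋯ < p_m} ⊆ {1,…,2n} be an index set and let λ be the corresponding k-strict partition, defined by λ_j = n+k+1−p_j + #{i < j : p_i + p_j > 2n+1}. Then for all 1 ≤ i ≤ j ≤ m: (i) λ_j ≤ k if and only if p_j > n; (ii) λ_i + λ_j ≤ 2k + j − i if and only if p_i + p_j > 2n+1; and (iii) p_j = n+k+1−λ_j + #{i < j : λ_i + λ_j ≤ 2k + j − i}. -/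
/-!
Write `C_a(q)` for the number of `l < a` with `p_l + q > 2n+1` ("`p_l` crosses `q`"), so that `λ_j = n+k+1−p_j+C_j(p_j)`.
Everything rests on two counting bounds. Since the values `p_l` are distinct, `C_a(q) ≤ p_a + q − (2n+2)`
(the `p_l` with `l < a` crossing `q` lie in `[2n+2−q, p_a)`). Since moreover no two of them sum to
`2n+1`, the fold `x ↦ min x (2n+1−x)` is injective on them, which gives `C_a(q) ≤ q − (n+1)` when all
`p_l < q`. The first bound handles `p_a ≤ n`, the second `p_a > n`; together they give (i) and the
"if" half of (ii). For the "only if" half, the indices `a ≤ l < b` that do not cross `p_b` have values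
in `[p_a, 2n−p_b]`. Finally (iii) is the definition of `λ_j` with the condition of (ii) substituted.
-/

open Finset

variable {m n : ℕ} {P : Fin m → ℕ}

theorem Nat.eq_of_min_sub_eq_min_sub {N x y : ℕ} (hx : x ≤ N) (hy : y ≤ N) (hxy : x + y ≠ N)
    (h : min x (N - x) = min y (N - y)) : x = y := by
  omega

structure IsIndexSet (n : ℕ) (P : Fin m → ℕ) : Prop where
  strictMono : StrictMono P
  le_two_mul : ∀ j, P j ≤ 2 * n
  add_ne : ∀ i j, P i + P j ≠ 2 * n + 1

def crossCount (n : ℕ) (P : Fin m → ℕ) (a : Fin m) (q : ℕ) : ℕ :=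
  (Finset.univ.filter fun l : Fin m => l < a ∧ 2 * n + 1 < P l + q).card

theorem crossCount_le_add_sub (hP : StrictMono P) (a : Fin m) (q : ℕ) :
    crossCount n P a q ≤ P a + q - (2 * n + 2) := by
  calc crossCount n P a q ≤ #(Ico (2 * n + 2 - q) (P a)) := by
        refine card_le_card_of_injOn P (fun l hl => ?_) hP.injective.injOn
        simp only [coe_filter, mem_univ, true_and, Set.mem_ofPred_eq] at hl
        have := hP hl.1
        simp only [coe_Ico, Set.mem_Ico]
        omega
    _ ≤ P a + q - (2 * n + 2) := by
        rw [Nat.card_Ico]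
        omega

theorem IsIndexSet.crossCount_le_sub (hP : IsIndexSet n P) (a : Fin m) (q : ℕ)
    (hq : ∀ l < a, P l < q) : crossCount n P a q ≤ q - (n + 1) := by
  let fold : Fin m → ℕ := fun l => min (P l) (2 * n + 1 - P l)
  calc crossCount n P a q ≤ #(Icc (2 * n + 2 - q) n) := by
        refine card_le_card_of_injOn fold (fun l hl => ?_) fun l _ l' _ h => ?_
        · simp only [coe_filter, mem_univ, true_and, Set.mem_ofPred_eq] at hl
          have := hq l hl.1
          have := hP.le_two_mul l
          simp only [coe_Icc, Set.mem_Icc, fold]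
          omega
        · refine hP.strictMono.injective (Nat.eq_of_min_sub_eq_min_sub ?_ ?_ (hP.add_ne l l') h)
          · linarith [hP.le_two_mul l]
          · linarith [hP.le_two_mul l']
    _ ≤ q - (n + 1) := by
        rw [Nat.card_Icc]
        omega

theorem crossCount_add_card_filter_Ico {a b : Fin m} (hab : a ≤ b) (q : ℕ) :
    crossCount n P a q + #{l ∈ Ico a b | 2 * n + 1 < P l + q} = crossCount n P b q := by
  rw [crossCount, crossCount, ← card_union_of_disjoint]
  · congr 1
    ext l
    simp only [mem_union, mem_filter, mem_univ, true_and, mem_Ico]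
    constructor
    · rintro (⟨hla, hl⟩ | ⟨⟨-, hlb⟩, hl⟩)
      exacts [⟨hla.trans_le hab, hl⟩, ⟨hlb, hl⟩]
    · rintro ⟨hlb, hl⟩
      by_cases hla : l < a
      exacts [Or.inl ⟨hla, hl⟩, Or.inr ⟨⟨not_lt.mp hla, hlb⟩, hl⟩]
  · rw [disjoint_left]
    simp only [mem_filter, mem_univ, true_and, mem_Ico]
    rintro l ⟨hla, -⟩ ⟨⟨hal, -⟩, -⟩
    exact hla.not_ge hal

theorem IsIndexSet.crossCount_add_crossCount_le (hP : IsIndexSet n P) {a b : Fin m} (hab : a ≤ b)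
    (hcross : 2 * n + 1 < P a + P b) :
    crossCount n P a (P a) + crossCount n P b (P b) + (2 * n + 2) ≤ P a + P b + (b - a) := by
  have hPab : P a ≤ P b := hP.strictMono.monotone hab
  have hIco : #{l ∈ Ico a b | 2 * n + 1 < P l + P b} = b - a := by
    rw [filter_true_of_mem, Fin.card_Ico]
    intro l hl
    have := hP.strictMono.monotone (mem_Ico.mp hl).1
    omega
  have hsplit := crossCount_add_card_filter_Ico (n := n) (P := P) hab (P b)
  rcases le_or_gt (P a) n with ha | ha
  · have := crossCount_le_add_sub (n := n) hP.strictMono a (P a)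
    have := crossCount_le_add_sub (n := n) hP.strictMono a (P b)
    omega
  · have := hP.crossCount_le_sub a (P a) fun l hl => hP.strictMono hl
    have := hP.crossCount_le_sub a (P b) fun l hl => (hP.strictMono hl).trans_le hPab
    omega

theorem IsIndexSet.lt_crossCount_add (hP : IsIndexSet n P) {a b : Fin m} (hab : a ≤ b)
    (hsmall : P a + P b ≤ 2 * n) :
    P a + P b + (b - a) < crossCount n P b (P b) + (2 * n + 2) := by
  have hsplit := crossCount_add_card_filter_Ico (n := n) (P := P) hab (P b)
  have hnoncross : #{l ∈ Ico a b | ¬ 2 * n + 1 < P l + P b} ≤ 2 * n + 1 - (P a + P b) := by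
    calc _ ≤ #(Icc (P a) (2 * n - P b)) := by
          refine card_le_card_of_injOn P (fun l hl => ?_) hP.strictMono.injective.injOn
          simp only [coe_filter, mem_Ico, Set.mem_ofPred_eq] at hl
          have := hP.strictMono.monotone hl.1.1
          have := hP.add_ne l b
          simp only [coe_Icc, Set.mem_Icc]
          omega
      _ = 2 * n + 1 - (P a + P b) := by
          rw [Nat.card_Icc]
          omega
  have := card_filter_add_card_filter_not (s := Ico a b) fun l => 2 * n + 1 < P l + P b
  rw [Fin.card_Ico] at this
  omega

theorem IsIndexSet.crossCount_add_crossCount_le_iff (hP : IsIndexSet n P) {a b : Fin m}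
    (hab : a ≤ b) :
    crossCount n P a (P a) + crossCount n P b (P b) + (2 * n + 2) ≤ P a + P b + (b - a) ↔
      2 * n + 1 < P a + P b := by
  refine ⟨fun h => ?_, hP.crossCount_add_crossCount_le hab⟩
  by_contra hsmall
  have := hP.lt_crossCount_add hab (by have := hP.add_ne a b; omega)
  omega

def partitionOfIndexSet (n k : ℕ) (P : Fin m → ℕ) (j : Fin m) : ℤ :=
  (n + k + 1 : ℤ) - P j + (crossCount n P j (P j) : ℤ)

theorem IsIndexSet.partitionOfIndexSet_le_iff (hP : IsIndexSet n P) (k : ℕ) (j : Fin m) :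
    partitionOfIndexSet n k P j ≤ k ↔ n < P j := by
  have := hP.crossCount_le_sub j (P j) fun l hl => hP.strictMono hl
  rw [partitionOfIndexSet]
  omega

theorem IsIndexSet.partitionOfIndexSet_add_le_iff (hP : IsIndexSet n P) (k : ℕ) {i j : Fin m}
    (hij : i ≤ j) :
    partitionOfIndexSet n k P i + partitionOfIndexSet n k P j ≤ 2 * k + (j : ℤ) - (i : ℤ) ↔
      2 * n + 1 < P i + P j := by
  rw [← hP.crossCount_add_crossCount_le_iff hij, partitionOfIndexSet, partitionOfIndexSet]
  omega

theorem IsIndexSet.eq_sub_partitionOfIndexSet_add_card (hP : IsIndexSet n P) (k : ℕ) (j : Fin m) :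
    (P j : ℤ) = (n + k + 1 : ℤ) - partitionOfIndexSet n k P j +
      ((Finset.univ.filter fun i : Fin m => i < j ∧
        partitionOfIndexSet n k P i + partitionOfIndexSet n k P j ≤
          2 * k + (j : ℤ) - (i : ℤ)).card : ℤ) := by
  rw [filter_congr fun i _ => and_congr_right fun hij =>
    hP.partitionOfIndexSet_add_le_iff k hij.le]
  rw [partitionOfIndexSet, crossCount]
  ring

theorem indexSet_partition_translation_general (n m k : ℕ)
    (P : Fin m → ℕ) (hmono : StrictMono P)
    (hrange : ∀ j, 1 ≤ P j ∧ P j ≤ 2 * n)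
    (hidx : ∀ i j, P i + P j ≠ 2 * n + 1)
    (lam : Fin m → ℤ)
    (hlam : ∀ j : Fin m, lam j = (n + k + 1 : ℤ) - P j +
      ((Finset.univ.filter fun i : Fin m => i < j ∧ 2 * n + 1 < P i + P j).card : ℤ))
    (i j : Fin m) (hij : i ≤ j) :
    (lam j ≤ (k : ℤ) ↔ (n : ℕ) < P j) ∧
    (lam i + lam j ≤ 2 * k + (j : ℤ) - (i : ℤ) ↔ 2 * n + 1 < P i + P j) ∧
    ((P j : ℤ) = (n + k + 1 : ℤ) - lam j +
      ((Finset.univ.filter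
        fun i' : Fin m => i' < j ∧ lam i' + lam j ≤ 2 * k + (j : ℤ) - (i' : ℤ)).card : ℤ)) := by
  have hP : IsIndexSet n P := ⟨hmono, fun j => (hrange j).2, hidx⟩
  obtain rfl : lam = partitionOfIndexSet n k P := funext hlam
  exact ⟨hP.partitionOfIndexSet_le_iff k j, hP.partitionOfIndexSet_add_le_iff k hij,
    hP.eq_sub_partitionOfIndexSet_add_card k j⟩

/-- **Translation between index sets and `k`-strict partitions (type C).**
Let `P = {p_1 < ⋯ < p_m} ⊆ {1,…,2n}` be an index set (so `p_i + p_j ≠ 2n+1`),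
with `m + k = n`, and let `λ_j = n+k+1−p_j + #{i < j : p_i + p_j > 2n+1}`.
Then for all `1 ≤ i ≤ j ≤ m`:
(i) `λ_j ≤ k ↔ p_j > n`;
(ii) `λ_i + λ_j ≤ 2k + j − i ↔ p_i + p_j > 2n+1`;
(iii) `p_j = n+k+1−λ_j + #{i < j : λ_i + λ_j ≤ 2k + j − i}`. -/
theorem indexSet_partition_translation (n m k : ℕ) (hmk : m + k = n)
    (P : Fin m → ℕ) (hmono : StrictMono P)
    (hrange : ∀ j, 1 ≤ P j ∧ P j ≤ 2 * n)
    (hidx : ∀ i j, P i + P j ≠ 2 * n + 1)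
    (lam : Fin m → ℤ)
    (hlam : ∀ j : Fin m, lam j = (n + k + 1 : ℤ) - P j +
      ((Finset.univ.filter fun i : Fin m => i < j ∧ 2 * n + 1 < P i + P j).card : ℤ))
    (i j : Fin m) (hij : i ≤ j) :
    (lam j ≤ (k : ℤ) ↔ (n : ℕ) < P j) ∧
    (lam i + lam j ≤ 2 * k + (j : ℤ) - (i : ℤ) ↔ 2 * n + 1 < P i + P j) ∧
    ((P j : ℤ) = (n + k + 1 : ℤ) - lam j +
      ((Finset.univ.filter
        fun i' : Fin m => i' < j ∧ lam i' + lam j ≤ 2 * k + (j : ℤ) - (i' : ℤ)).card : ℤ)) :=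
  indexSet_partition_translation_general n m k P hmono hrange hidx lam hlam i j hij
end

section
/- Fix integers 0 ≤ m ≤ n, set k = n − m, and let λ ∈ 𝒫(k,n). Define the sequence λ^∨ by λ^∨_{m+1−j} = 2k + 1 − λ_j + #{i < j : λ_i + λ_j ≤ 2k + j − i} + #{i > j : λ_i + λ_j > 2k + i − j} for 1 ≤ j ≤ m. Then λ^∨ is again an element of 𝒫(k,n), and p_j(λ^∨) = 2n + 1 − p_{m+1−j}(λ) for all 1 ≤ j ≤ m, where for any μ ∈ 𝒫(k,n) one sets p_j(μ) = n+k+1−μ_j + #{i < j : μ_i + μ_j ≤ 2k + j − i}. -/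
/-!
The index sequence `p(λ)` of `λ ∈ 𝒫(k,n)` is strictly increasing with values in `[1, 2n]`, and
for `i < j` the pair is *related* (`λ_i + λ_j > 2k + j - i`) exactly when `p_i + p_j ≤ 2n`, while
otherwise `p_i + p_j ≥ 2n + 2`; so no two entries sum to `2n + 1`. Conversely every such sequence
`q` is the index sequence of `μ_j = n + k + 1 - q_j + #{i < j : q_i + q_j > 2n + 1}`, which lies in
`𝒫(k,n)`: each required inequality comes from counting values of `q` in an integer interval, using
that `x ↦ 2n + 1 - x` sends values of `q` to non-values. The reflection
`q_j = 2n + 1 - p_{m+1-j}(λ)` keeps these properties, and the formula defining `λ^∨` is exactly `μ`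
for this `q`: reversing indices turns the related pairs `(j, i)`, `i > j`, into the `i < j` with
`q_i + q_j > 2n + 1`. Hence `λ^∨ ∈ 𝒫(k,n)`, and its index sequence is `q`.
-/

open Finset Function

namespace KStrict

variable {m : ℕ}

/-- `lam ∈ 𝒫(k, n)` when `m + k = n`; parts are indexed from `0`. -/
structure IsKStrictPartition (n k : ℕ) (lam : Fin m → ℤ) : Prop where
  antitone : Antitone lam
  bounds : ∀ j, 0 ≤ lam j ∧ lam j ≤ (n + k : ℤ)
  strict : ∀ i j : Fin m, (i : ℕ) + 1 = (j : ℕ) → (k : ℤ) < lam i → lam j < lam i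

/-- Pairs `i < j` with `lam i + lam j > 2k + j - i` are *related*. -/
def unrelatedBefore (k : ℕ) (lam : Fin m → ℤ) (j : Fin m) : ℕ :=
  #{i | i < j ∧ lam i + lam j ≤ 2 * k + (j : ℤ) - (i : ℤ)}

/-- The index sequence `p_j(λ)`. -/
def indexSeq (n k : ℕ) (lam : Fin m → ℤ) (j : Fin m) : ℤ :=
  (n + k + 1 : ℤ) - lam j + (unrelatedBefore k lam j : ℤ)

structure IsIndexSeq (n : ℕ) (q : Fin m → ℤ) : Prop where
  strictMono : StrictMono q
  one_le : ∀ j, 1 ≤ q j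
  le_two_mul : ∀ j, q j ≤ 2 * n
  add_ne : ∀ a b, q a + q b ≠ 2 * n + 1

lemma unrelatedBefore_le (k : ℕ) (lam : Fin m → ℤ) (j : Fin m) : unrelatedBefore k lam j ≤ j :=
  (card_le_card fun _ hh => mem_Iio.mpr (mem_filter.mp hh).2.1).trans_eq (Fin.card_Iio j)

namespace IsKStrictPartition

variable {n k : ℕ} {lam : Fin m → ℤ} (hlam : IsKStrictPartition n k lam)
include hlam

lemma add_sub_le {i j : Fin m} (hij : i ≤ j) (hk : (k : ℤ) < lam j) :
    lam j + ((j : ℤ) - i) ≤ lam i := by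
  obtain ⟨d, hd⟩ := Nat.exists_eq_add_of_le (Fin.le_def.mp hij)
  induction d generalizing i with
  | zero => simp [Fin.ext hd]
  | succ d ih =>
    let i' : Fin m := ⟨i + 1, by omega⟩
    have hgap := ih (i := i') (Fin.le_def.mpr (by simp [i']; omega)) (by simp [i']; omega)
    have hdrop := hlam.strict i i' rfl (hk.trans_le (hlam.antitone hij))
    simp only [i'] at hgap
    push_cast at hgap
    linarith

lemma k_lt_of_related {i j : Fin m} (hij : i < j)
    (hrel : 2 * k + (j : ℤ) - i < lam i + lam j) : (k : ℤ) < lam i := by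
  have := hlam.antitone hij.le
  have : (i : ℤ) < j := by exact_mod_cast hij
  linarith

lemma related_of_le {h i j : Fin m} (hhi : h ≤ i) (hij : i < j)
    (hrel : 2 * k + (j : ℤ) - i < lam i + lam j) : 2 * k + (j : ℤ) - h < lam h + lam j := by
  have := hlam.add_sub_le hhi (hlam.k_lt_of_related hij hrel)
  linarith

lemma lt_of_related {i j : Fin m} (hij : i < j)
    (hrel : 2 * k + (j : ℤ) - i < lam i + lam j) : lam j < lam i := by
  have hk := hlam.k_lt_of_related hij hrel
  by_cases hj : (k : ℤ) < lam j
  · have := hlam.add_sub_le hij.le hj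
    have : (i : ℤ) < j := by exact_mod_cast hij
    linarith
  · linarith

lemma unrelatedBefore_eq_zero {i : Fin m} (hk : (k : ℤ) < lam i) :
    unrelatedBefore k lam i = 0 := by
  refine card_eq_zero.mpr (filter_eq_empty_iff.mpr fun h _ ⟨hhi, hun⟩ => ?_)
  have := hlam.add_sub_le hhi.le hk
  have : (h : ℤ) < i := by exact_mod_cast hhi
  linarith

lemma unrelatedBefore_le_of_related {i j : Fin m} (hij : i < j)
    (hrel : 2 * k + (j : ℤ) - i < lam i + lam j) : unrelatedBefore k lam j ≤ j - i - 1 := by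
  rw [← Fin.card_Ioo]
  refine card_le_card fun h hh => ?_
  simp only [mem_filter, mem_univ, true_and] at hh
  refine mem_Ioo.mpr ⟨lt_of_not_ge fun hhi => ?_, hh.1⟩
  exact (hlam.related_of_le hhi hij hrel).not_ge hh.2

lemma sub_le_unrelatedBefore {i j : Fin m}
    (hun : lam i + lam j ≤ 2 * k + (j : ℤ) - i) : j - i ≤ unrelatedBefore k lam j := by
  rw [← Fin.card_Ico]
  refine card_le_card fun h hh => ?_
  obtain ⟨hih, hhj⟩ := mem_Ico.mp hh
  simp only [mem_filter, mem_univ, true_and]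
  exact ⟨hhj, le_of_not_gt fun hrel => (hlam.related_of_le hih hhj hrel).not_ge hun⟩

lemma filter_unrelated_subset {i j : Fin m} (hij : i ≤ j) :
    univ.filter (fun h => h < i ∧ lam h + lam i ≤ 2 * k + (i : ℤ) - h) ⊆
      univ.filter (fun h => h < j ∧ lam h + lam j ≤ 2 * k + (j : ℤ) - h) := by
  intro h hh
  simp only [mem_filter, mem_univ, true_and] at hh ⊢
  have := hlam.antitone hij
  have : (i : ℤ) ≤ j := by exact_mod_cast hij
  exact ⟨hh.1.trans_le hij, by linarith [hh.2]⟩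

lemma unrelatedBefore_lt_of_unrelated {i j : Fin m} (hij : i < j)
    (hun : lam i + lam j ≤ 2 * k + (j : ℤ) - i) :
    unrelatedBefore k lam i < unrelatedBefore k lam j := by
  refine card_lt_card (ssubset_of_subset_of_ne (hlam.filter_unrelated_subset hij.le) fun heq => ?_)
  have hmem : i ∈ univ.filter (fun h => h < j ∧ lam h + lam j ≤ 2 * k + (j : ℤ) - h) := by
    simpa using ⟨hij, hun⟩
  simp [← heq] at hmem

lemma indexSeq_strictMono : StrictMono (indexSeq n k lam) := by
  intro i j hij
  have hmono : unrelatedBefore k lam i ≤ unrelatedBefore k lam j :=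
    card_le_card (hlam.filter_unrelated_subset hij.le)
  by_cases hrel : 2 * k + (j : ℤ) - i < lam i + lam j
  · have := hlam.lt_of_related hij hrel
    unfold indexSeq
    omega
  · have := hlam.unrelatedBefore_lt_of_unrelated hij (le_of_not_gt hrel)
    have := hlam.antitone hij.le
    unfold indexSeq
    omega

lemma indexSeq_add_le_of_related {i j : Fin m} (hij : i < j)
    (hrel : 2 * k + (j : ℤ) - i < lam i + lam j) :
    indexSeq n k lam i + indexSeq n k lam j ≤ 2 * n := by
  have hi := hlam.unrelatedBefore_eq_zero (hlam.k_lt_of_related hij hrel)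
  have hj := hlam.unrelatedBefore_le_of_related hij hrel
  have : (i : ℕ) < j := hij
  unfold indexSeq
  omega

lemma add_le_indexSeq_add_of_unrelated {i j : Fin m} (hij : i < j)
    (hun : lam i + lam j ≤ 2 * k + (j : ℤ) - i) :
    2 * n + 2 ≤ indexSeq n k lam i + indexSeq n k lam j := by
  have hj := hlam.sub_le_unrelatedBefore hun
  have : (i : ℕ) < j := hij
  unfold indexSeq
  omega

lemma indexSeq_add_le_iff {i j : Fin m} (hij : i < j) :
    indexSeq n k lam i + indexSeq n k lam j ≤ 2 * n ↔ 2 * k + (j : ℤ) - i < lam i + lam j := by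
  refine ⟨fun hsum => lt_of_not_ge fun hun => ?_, hlam.indexSeq_add_le_of_related hij⟩
  have := hlam.add_le_indexSeq_add_of_unrelated hij hun
  omega

lemma indexSeq_add_ne {i j : Fin m} (hij : i < j) :
    indexSeq n k lam i + indexSeq n k lam j ≠ 2 * n + 1 := by
  by_cases hrel : 2 * k + (j : ℤ) - i < lam i + lam j
  · have := hlam.indexSeq_add_le_of_related (n := n) hij hrel
    omega
  · have := hlam.add_le_indexSeq_add_of_unrelated (n := n) hij (le_of_not_gt hrel)
    omega

lemma isIndexSeq (hmk : m + k = n) : IsIndexSeq n (indexSeq n k lam) where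
  strictMono := hlam.indexSeq_strictMono
  one_le j := by
    have := (hlam.bounds j).2
    unfold indexSeq
    omega
  le_two_mul j := by
    have := (hlam.bounds j).1
    have := unrelatedBefore_le k lam j
    have := j.isLt
    unfold indexSeq
    omega
  add_ne a b := by
    rcases lt_trichotomy a b with hab | rfl | hab
    · exact hlam.indexSeq_add_ne hab
    · omega
    · rw [add_comm]
      exact hlam.indexSeq_add_ne hab

end IsKStrictPartition

def crossings (n : ℕ) (q : Fin m → ℤ) (j : Fin m) : ℕ :=
  #{i | i < j ∧ 2 * n + 1 < q i + q j}

def ofIndexSeq (n k : ℕ) (q : Fin m → ℤ) (j : Fin m) : ℤ :=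
  n + k + 1 - q j + crossings n q j

/-- Counting through the folding `x ↦ x` or `x ↦ N - x`, which is injective on the values of `q`
when no two of them sum to `N`. -/
lemma card_le_of_forall_mem_or_sub_mem {ι : Type*} {q : ι → ℤ} {N : ℤ} (hq : Injective q)
    (hN : ∀ a b, q a + q b ≠ N) {T : Finset ι} {s : Finset ℤ}
    (hT : ∀ l ∈ T, q l ∈ s ∨ N - q l ∈ s) : #T ≤ #s := by
  refine card_le_card_of_injOn (fun l => if q l ∈ s then q l else N - q l) (fun l hl => ?_) ?_
  · dsimp only
    split_ifs with h
    exacts [h, (hT l hl).resolve_left h]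
  · intro a _ b _ hab
    dsimp only at hab
    split_ifs at hab with ha hb hb
    · exact hq hab
    · exact absurd (by omega) (hN a b)
    · exact absurd (by omega) (hN a b)
    · exact hq (by omega)

namespace IsIndexSeq

variable {n k : ℕ} {q : Fin m → ℤ} (hq : IsIndexSeq n q)
include hq

lemma crossings_eq_card (j : Fin m) :
    crossings n q j = #{i | q i ∈ Ioo (2 * n + 1 - q j) (q j)} := by
  refine congrArg card (filter_congr fun i _ => ?_)
  rw [mem_Ioo, ← hq.strictMono.lt_iff_lt]
  omega

lemma crossings_le (j : Fin m) : crossings n q j ≤ (q j - n - 1).toNat := by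
  rw [hq.crossings_eq_card]
  refine (card_le_of_forall_mem_or_sub_mem hq.strictMono.injective hq.add_ne
    (s := Ioc (2 * n + 1 - q j) n) fun l hl => ?_).trans_eq (by rw [Int.card_Ioc]; omega)
  simp only [mem_filter, mem_univ, true_and, mem_Ioo] at hl
  simp only [mem_Ioc]
  omega

lemma sub_crossings_le (hmk : m + k = n) (j : Fin m) : q j - crossings n q j ≤ n + k + 1 := by
  rw [hq.crossings_eq_card]
  set S : Finset (Fin m) := {i | q i ∈ Ioo (2 * n + 1 - q j) (q j)}
  have hsplit := card_le_card_sdiff_add_card (s := univ) (t := S)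
  have hrest : #(univ \ S) ≤ #(Icc 1 (2 * n + 1 - q j)) := by
    refine card_le_of_forall_mem_or_sub_mem hq.strictMono.injective hq.add_ne fun l hl => ?_
    simp only [S, mem_sdiff, mem_filter, mem_univ, true_and, mem_Ioo] at hl
    have := hq.one_le l
    have := hq.le_two_mul l
    simp only [mem_Icc]
    omega
  rw [card_univ, Fintype.card_fin] at hsplit
  rw [Int.card_Icc] at hrest
  have := hq.le_two_mul j
  omega

lemma crossings_le_add {i j : Fin m} (hij : q i ≤ q j) :
    (crossings n q j : ℤ) ≤ crossings n q i + (q j - q i) := by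
  rw [hq.crossings_eq_card, hq.crossings_eq_card]
  set Si : Finset (Fin m) := {l | q l ∈ Ioo (2 * n + 1 - q i) (q i)}
  set Sj : Finset (Fin m) := {l | q l ∈ Ioo (2 * n + 1 - q j) (q j)}
  have hsplit := card_le_card_sdiff_add_card (s := Sj) (t := Si)
  have hdiff : #(Sj \ Si) ≤ #(Ioc (2 * n + 1 - q j) (2 * n + 1 - q i)) := by
    refine card_le_of_forall_mem_or_sub_mem hq.strictMono.injective hq.add_ne fun l hl => ?_
    simp only [Si, Sj, mem_sdiff, mem_filter, mem_univ, true_and, mem_Ioo] at hl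
    simp only [mem_Ioc]
    omega
  rw [Int.card_Ioc] at hdiff
  omega

lemma crossings_le_sub_add {i j : Fin m} :
    crossings n q j ≤ (j - i) + (q i + q j - 2 * n - 2).toNat := by
  rw [hq.crossings_eq_card, ← Fin.card_Ico]
  set S : Finset (Fin m) := {l | q l ∈ Ioo (2 * n + 1 - q j) (q j)}
  have hsplit := card_le_card_sdiff_add_card (s := S) (t := Ico i j)
  have hdiff : #(S \ Ico i j) ≤ #(Ioo (2 * n + 1 - q j) (q i)) := by
    refine card_le_of_forall_mem_or_sub_mem hq.strictMono.injective hq.add_ne fun l hl => ?_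
    simp only [S, mem_sdiff, mem_filter, mem_univ, true_and, mem_Ioo, mem_Ico, not_and_or,
      not_le, not_lt] at hl
    obtain ⟨⟨hlow, hlj⟩, hout⟩ := hl
    have hli : q l < q i :=
      hq.strictMono (hout.resolve_right (hq.strictMono.lt_iff_lt.mp hlj).not_ge)
    left
    exact mem_Ioo.mpr ⟨hlow, hli⟩
  rw [Int.card_Ioo] at hdiff
  omega

lemma sub_le_crossings_add {i j : Fin m} :
    j - i ≤ crossings n q j + (2 * n + 1 - q i - q j).toNat := by
  rw [hq.crossings_eq_card, ← Fin.card_Ico]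
  set S : Finset (Fin m) := {l | q l ∈ Ioo (2 * n + 1 - q j) (q j)}
  have hsplit := card_le_card_sdiff_add_card (s := Ico i j) (t := S)
  have hdiff : #(Ico i j \ S) ≤ #(Ico (q i) (2 * n + 1 - q j)) := by
    refine card_le_of_forall_mem_or_sub_mem hq.strictMono.injective hq.add_ne fun l hl => ?_
    simp only [S, mem_sdiff, mem_Ico, mem_filter, mem_univ, true_and, mem_Ioo] at hl
    obtain ⟨⟨hil, hlj⟩, hout⟩ := hl
    have := hq.strictMono.monotone hil
    have := hq.strictMono hlj
    have := hq.add_ne l j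
    left
    rw [mem_Ico]
    omega
  rw [Int.card_Ico] at hdiff
  omega

lemma ofIndexSeq_add_le_iff {i j : Fin m} (hij : i < j) :
    ofIndexSeq n k q i + ofIndexSeq n k q j ≤ 2 * k + (j : ℤ) - i ↔ 2 * n + 1 < q i + q j := by
  have := hq.crossings_le i
  have := hq.crossings_le j
  have := hq.crossings_le_sub_add (i := i) (j := j)
  have := hq.sub_le_crossings_add (i := i) (j := j)
  have := hq.add_ne i j
  have : (i : ℕ) < j := hij
  -- `⇐`: if `q i ≤ n` then `crossings n q i = 0`, otherwise bound both crossings by `crossings_le`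
  unfold ofIndexSeq
  omega

lemma isKStrictPartition_ofIndexSeq (hmk : m + k = n) :
    IsKStrictPartition n k (ofIndexSeq n k q) where
  antitone i j hij := by
    have := hq.crossings_le_add (hq.strictMono.monotone hij)
    unfold ofIndexSeq
    omega
  bounds j := by
    have := hq.sub_crossings_le hmk j
    have := hq.crossings_le j
    have := hq.one_le j
    unfold ofIndexSeq
    omega
  strict i j hij hk := by
    have := hq.crossings_le i
    have := hq.crossings_le j
    have := hq.strictMono (Fin.lt_def.mpr (by omega) : i < j)
    -- a part above `k` forces `q i ≤ n`
    unfold ofIndexSeq at *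
    omega

lemma indexSeq_ofIndexSeq : indexSeq n k (ofIndexSeq n k q) = q := by
  funext j
  have : unrelatedBefore k (ofIndexSeq n k q) j = crossings n q j :=
    congrArg card (filter_congr fun i _ => and_congr_right hq.ofIndexSeq_add_le_iff)
  rw [indexSeq, this, ofIndexSeq]
  ring

end IsIndexSeq

def reflect (n : ℕ) (q : Fin m → ℤ) (j : Fin m) : ℤ :=
  2 * n + 1 - q j.rev

lemma IsIndexSeq.reflect {n : ℕ} {q : Fin m → ℤ} (hq : IsIndexSeq n q) :
    IsIndexSeq n (reflect n q) where
  strictMono i j hij := by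
    have := hq.strictMono (Fin.rev_lt_rev.mpr hij)
    unfold KStrict.reflect
    omega
  one_le j := by
    have := hq.le_two_mul j.rev
    unfold KStrict.reflect
    omega
  le_two_mul j := by
    have := hq.one_le j.rev
    unfold KStrict.reflect
    omega
  add_ne a b := by
    have := hq.add_ne a.rev b.rev
    unfold KStrict.reflect
    omega

namespace IsKStrictPartition

variable {n k : ℕ} {lam : Fin m → ℤ} (hlam : IsKStrictPartition n k lam)
include hlam

lemma card_related_after_eq_crossings (j : Fin m) :
    #{i | j < i ∧ 2 * k + (i : ℤ) - j < lam i + lam j} =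
      crossings n (reflect n (indexSeq n k lam)) j.rev := by
  refine card_nbij' Fin.rev Fin.rev (fun i hi => ?_) (fun i hi => ?_)
    (fun i _ => Fin.rev_rev i) (fun i _ => Fin.rev_rev i)
  · simp only [coe_filter, mem_univ, true_and, Set.mem_ofPred_eq, reflect, Fin.rev_rev,
      Fin.rev_lt_rev] at hi ⊢
    have := (hlam.indexSeq_add_le_iff (n := n) hi.1).mpr (by linarith [hi.2])
    exact ⟨hi.1, by omega⟩
  · simp only [coe_filter, mem_univ, true_and, Set.mem_ofPred_eq, reflect, Fin.rev_rev] at hi ⊢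
    rw [← Fin.rev_lt_rev, Fin.rev_rev] at hi
    have := (hlam.indexSeq_add_le_iff (n := n) hi.1).mp (by omega)
    exact ⟨hi.1, by linarith⟩

lemma eq_ofIndexSeq_reflect {dual : Fin m → ℤ}
    (hdual : ∀ j : Fin m, dual j.rev = 2 * k + 1 - lam j +
      (#{i | i < j ∧ lam i + lam j ≤ 2 * k + (j : ℤ) - i} : ℤ) +
      (#{i | j < i ∧ 2 * k + (i : ℤ) - j < lam i + lam j} : ℤ)) :
    dual = ofIndexSeq n k (reflect n (indexSeq n k lam)) := by
  funext j
  obtain ⟨j, rfl⟩ := Fin.rev_surjective j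
  rw [hdual, ofIndexSeq, ← hlam.card_related_after_eq_crossings]
  simp only [reflect, indexSeq, unrelatedBefore, Fin.rev_rev]
  ring

end IsKStrictPartition

end KStrict

/-- **The dual `k`-strict partition.**  Let `m + k = n` and let `λ ∈ 𝒫(k,n)` be a
`k`-strict partition in the `m × (n+k)` rectangle.  Define `λ^∨` by
`λ^∨_{m+1−j} = 2k+1−λ_j + #{i<j : λ_i+λ_j ≤ 2k+j−i} + #{i>j : λ_i+λ_j > 2k+i−j}`.
Then `λ^∨ ∈ 𝒫(k,n)` and `p_j(λ^∨) = 2n+1−p_{m+1−j}(λ)` for all `j`, where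
`p_j(μ) = n+k+1−μ_j + #{i<j : μ_i+μ_j ≤ 2k+j−i}`. -/
theorem dual_partition (n m k : ℕ) (hmk : m + k = n)
    (lam : Fin m → ℤ)
    (hdec : ∀ i j : Fin m, i ≤ j → lam j ≤ lam i)
    (hbd : ∀ j, 0 ≤ lam j ∧ lam j ≤ (n + k : ℤ))
    (hstrict : ∀ i j : Fin m, (i : ℕ) + 1 = (j : ℕ) → (k : ℤ) < lam i → lam j < lam i)
    (dual : Fin m → ℤ)
    (hdual : ∀ j : Fin m, dual j.rev =
      2 * k + 1 - lam j +
        ((Finset.univ.filter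
          fun i : Fin m => i < j ∧ lam i + lam j ≤ 2 * k + (j : ℤ) - (i : ℤ)).card : ℤ) +
        ((Finset.univ.filter
          fun i : Fin m => j < i ∧ 2 * k + (i : ℤ) - (j : ℤ) < lam i + lam j).card : ℤ)) :
    ((∀ i j : Fin m, i ≤ j → dual j ≤ dual i) ∧
     (∀ j, 0 ≤ dual j ∧ dual j ≤ (n + k : ℤ)) ∧
     (∀ i j : Fin m, (i : ℕ) + 1 = (j : ℕ) → (k : ℤ) < dual i → dual j < dual i)) ∧
    (∀ j : Fin m,
      (n + k + 1 : ℤ) - dual j +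
        ((Finset.univ.filter
          fun i : Fin m => i < j ∧ dual i + dual j ≤ 2 * k + (j : ℤ) - (i : ℤ)).card : ℤ) =
      2 * n + 1 -
        ((n + k + 1 : ℤ) - lam j.rev +
          ((Finset.univ.filter
            fun i : Fin m => i < j.rev ∧
              lam i + lam j.rev ≤ 2 * k + (j.rev : ℤ) - (i : ℤ)).card : ℤ))) := by
  have hlam : KStrict.IsKStrictPartition n k lam := ⟨fun i j => hdec i j, hbd, hstrict⟩
  have hq := (hlam.isIndexSeq hmk).reflect
  obtain rfl := hlam.eq_ofIndexSeq_reflect hdual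
  have hdual := hq.isKStrictPartition_ofIndexSeq hmk
  exact ⟨⟨fun i j hij => hdual.antitone hij, hdual.bounds, hdual.strict⟩,
    congrFun hq.indexSeq_ofIndexSeq⟩
end

section
/- Fix integers 1 ≤ m ≤ n and set k = n+1−m. Let P′ = {p′_1 < ⋯ < p′_m} be a subset of {1,…,2n+2} of cardinality m with p′_i + p′_j ≠ 2n+3 for all i, j, and define λ_j = n+k+1−p′_j if p′_j ≤ n+1, and λ_j = n+k+2−p′_j + #{i < j : p′_i + p′_j > 2n+3} if p′_j > n+1. Then λ = (λ_1,…,λ_m) is a k-strict partition contained in an m × (n+k) rectangle, and for all 1 ≤ i ≤ j ≤ m: (i) λ_j ≤ k if and only if p′_j > n; (ii) λ_j = k and (j = 1 or λ_{j−1} > k) if and only if p′_j ∈ {n+1, n+2}; and (iii) for i < j, λ_i + λ_j ≤ 2k − 1 + j − i if and only if p′_i + p′_j > 2n+3. -/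
/-!
Write `N = 2n+3`; the count in `λ_j` is the number `c_j` of indices `x < j` with
`p'_x > N - p'_j`. Every claim reduces to pigeonhole bounds on `c_j`. Since no two entries
of `P'` sum to `N`, the fold `p ↦ min p (N - p)` is injective on `P'`, which bounds `c_j`
(and its growth in `j`) by the length of an interval of folded values. Conversely, the
indices below `j` that are not counted have entries in `[1, N - 1 - p'_j]`, which bounds
`c_j` from below.
-/

open Finset

lemma card_le_of_injOn_Icc {α : Type*} {s : Finset α} {f : α → ℕ} (hf : Set.InjOn f s)
    {a b : ℕ} (h : ∀ x ∈ s, a ≤ f x ∧ f x ≤ b) : #s ≤ b + 1 - a := by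
  simpa using card_le_card_of_injOn f (fun x hx => mem_Icc.2 (h x hx)) hf

lemma StrictMono.add_sub_le {m : ℕ} {P : Fin m → ℕ} (hP : StrictMono P) {i j : Fin m}
    (hij : i ≤ j) : P i + ((j : ℕ) - i) ≤ P j := by
  have h := card_le_of_injOn_Icc (s := Ioc i j) hP.injective.injOn (a := P i + 1) (b := P j)
    fun x hx => by
      obtain ⟨hix, hxj⟩ := mem_Ioc.1 hx
      exact ⟨hP hix, hP.monotone hxj⟩
  rw [Fin.card_Ioc] at h
  have := hP.monotone hij
  omega

section

variable {n m : ℕ} {P : Fin m → ℕ}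

lemma injective_min_sub (hP : Function.Injective P) (hsum : ∀ i j, P i + P j ≠ 2 * n + 3)
    (hle : ∀ j, P j ≤ 2 * n + 2) : Function.Injective fun x => min (P x) (2 * n + 3 - P x) := by
  intro a b h
  have := hsum a b
  have := hle a
  have := hle b
  exact hP (by simp only at h; omega)

def crossers (n : ℕ) (P : Fin m → ℕ) (i j : Fin m) : Finset (Fin m) :=
  {x | x < i ∧ 2 * n + 3 < P x + P j}

@[simp]
lemma mem_crossers {i j x : Fin m} : x ∈ crossers n P i j ↔ x < i ∧ 2 * n + 3 < P x + P j := by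
  simp [crossers]

lemma card_crossers_le_of_forall_le (hP : StrictMono P) {i j : Fin m} {b : ℕ}
    (hb : ∀ x < i, P x ≤ b) : #(crossers n P i j) ≤ b + P j - (2 * n + 3) := by
  refine (card_le_of_injOn_Icc hP.injective.injOn (a := 2 * n + 4 - P j) (b := b)
    fun x hx => ?_).trans (by omega)
  rw [mem_crossers] at hx
  have := hb x hx.1
  omega

lemma card_crossers_le_add (i i' j : Fin m) :
    #(crossers n P i' j) ≤ #(crossers n P i j) + ((i' : ℕ) - i) := by
  calc #(crossers n P i' j) ≤ #(crossers n P i j ∪ Ico i i') := by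
        refine card_le_card fun x hx => ?_
        simp only [mem_union, mem_crossers, mem_Ico] at hx ⊢
        by_cases hxi : x < i
        · exact .inl ⟨hxi, hx.2⟩
        · exact .inr ⟨not_lt.1 hxi, hx.1⟩
    _ ≤ #(crossers n P i j) + #(Ico i i') := card_union_le _ _
    _ = #(crossers n P i j) + ((i' : ℕ) - i) := by rw [Fin.card_Ico]

lemma sub_le_card_crossers_add (hP : StrictMono P) (hsum : ∀ i j, P i + P j ≠ 2 * n + 3)
    (i j : Fin m) :
    (j : ℕ) - i ≤ #(crossers n P j j) + (2 * n + 3 - P i - P j) := by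
  set T := (Ico i j).filter fun x => P x + P j < 2 * n + 3
  have hT : #T ≤ 2 * n + 3 - P i - P j := by
    refine (card_le_of_injOn_Icc ((add_left_injective (P j)).comp hP.injective).injOn
      (a := P i + P j) (b := 2 * n + 2) fun x hx => ?_).trans (by omega)
    obtain ⟨hx, hxj⟩ := mem_filter.1 hx
    have := hP.monotone (mem_Ico.1 hx).1
    simp only [Function.comp_apply]
    omega
  calc (j : ℕ) - i = #(Ico i j) := (Fin.card_Ico i j).symm
    _ ≤ #(crossers n P j j ∪ T) := by
        refine card_le_card fun x hx => ?_
        have := hsum x j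
        simp only [T, mem_union, mem_filter, mem_crossers] at hx ⊢
        by_cases hc : 2 * n + 3 < P x + P j
        · exact .inl ⟨(mem_Ico.1 hx).2, hc⟩
        · exact .inr ⟨hx, by omega⟩
    _ ≤ #(crossers n P j j) + #T := card_union_le _ _
    _ ≤ #(crossers n P j j) + (2 * n + 3 - P i - P j) := by gcongr

lemma card_crossers_self_le (hP : StrictMono P) (hsum : ∀ i j, P i + P j ≠ 2 * n + 3)
    (hle : ∀ j, P j ≤ 2 * n + 2) (j : Fin m) : #(crossers n P j j) ≤ P j - (n + 2) := by
  refine (card_le_of_injOn_Icc (injective_min_sub hP.injective hsum hle).injOn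
    (a := 2 * n + 4 - P j) (b := n + 1) fun x hx => ?_).trans (by omega)
  rw [mem_crossers] at hx
  have := hP hx.1
  omega

lemma card_crossers_self_add_le (hP : StrictMono P) (hsum : ∀ i j, P i + P j ≠ 2 * n + 3)
    (hle : ∀ j, P j ≤ 2 * n + 2) {i j : Fin m} (hij : i ≤ j) (hi : n + 2 ≤ P i) :
    #(crossers n P j j) + P i ≤ #(crossers n P i i) + P j := by
  have := hle i
  have hnew : #(crossers n P j j \ crossers n P i i) ≤ P j - P i := by
    refine (card_le_of_injOn_Icc (injective_min_sub hP.injective hsum hle).injOn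
      (a := 2 * n + 4 - P j) (b := 2 * n + 3 - P i) fun x hx => ?_).trans (by omega)
    simp only [mem_sdiff, mem_crossers] at hx
    have := hP hx.1.1
    have := hsum x i
    rcases lt_or_ge x i with hxi | hix
    · have : ¬2 * n + 3 < P x + P i := fun h => hx.2 ⟨hxi, h⟩
      omega
    · have := hP.monotone hix
      omega
  have := card_le_card_sdiff_add_card (s := crossers n P j j) (t := crossers n P i i)
  have := hP.monotone hij
  omega

def typeDPartition (n k : ℕ) (P : Fin m → ℕ) (j : Fin m) : ℤ :=
  if P j ≤ n + 1 then (n + k + 1 : ℤ) - P j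
  else (n + k + 2 : ℤ) - P j + #(crossers n P j j)

variable {k : ℕ}

lemma typeDPartition_le_iff (hP : StrictMono P) (hsum : ∀ i j, P i + P j ≠ 2 * n + 3)
    (hle : ∀ j, P j ≤ 2 * n + 2) (j : Fin m) : typeDPartition n k P j ≤ k ↔ n < P j := by
  have := card_crossers_self_le hP hsum hle j
  unfold typeDPartition
  split_ifs <;> omega

lemma typeDPartition_antitone (hP : StrictMono P) (hsum : ∀ i j, P i + P j ≠ 2 * n + 3)
    (hle : ∀ j, P j ≤ 2 * n + 2) : Antitone (typeDPartition n k P) := by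
  intro i j hij
  have := hP.monotone hij
  rcases le_or_gt (P i) (n + 1) with hi | hi
  · have := card_crossers_self_le hP hsum hle j
    unfold typeDPartition
    split_ifs <;> omega
  · have := card_crossers_self_add_le hP hsum hle hij hi
    unfold typeDPartition
    split_ifs <;> omega

lemma typeDPartition_le (hP : StrictMono P) (hsum : ∀ i j, P i + P j ≠ 2 * n + 3)
    (hrange : ∀ j, 1 ≤ P j ∧ P j ≤ 2 * n + 2) (j : Fin m) : typeDPartition n k P j ≤ n + k := by
  have := card_crossers_self_le hP hsum (fun j => (hrange j).2) j
  have := hrange j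
  unfold typeDPartition
  split_ifs <;> omega

lemma typeDPartition_nonneg (hP : StrictMono P) (hsum : ∀ i j, P i + P j ≠ 2 * n + 3)
    (hrange : ∀ j, 1 ≤ P j ∧ P j ≤ 2 * n + 2) (hmk : m + k = n + 1) (j : Fin m) :
    0 ≤ typeDPartition n k P j := by
  obtain ⟨m, rfl⟩ : ∃ m', m = m' + 1 := ⟨m - 1, by have := j.pos; omega⟩
  refine le_trans ?_ (typeDPartition_antitone hP hsum (fun j => (hrange j).2) (Fin.le_last j))
  have hcount := sub_le_card_crossers_add hP hsum 0 (Fin.last m)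
  simp only [Fin.val_last, Fin.val_zero] at hcount
  have := hrange 0
  have := hrange (Fin.last m)
  unfold typeDPartition
  split_ifs <;> omega

lemma typeDPartition_lt_of_lt (hP : StrictMono P) (hsum : ∀ i j, P i + P j ≠ 2 * n + 3)
    (hle : ∀ j, P j ≤ 2 * n + 2) {i j : Fin m} (hij : i < j) (hk : k < typeDPartition n k P i) :
    typeDPartition n k P j < typeDPartition n k P i := by
  have hi : P i ≤ n := not_lt.1 fun h => hk.not_ge ((typeDPartition_le_iff hP hsum hle i).2 h)
  by_cases hj : n < P j
  · exact ((typeDPartition_le_iff hP hsum hle j).2 hj).trans_lt hk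
  · have := hP hij
    unfold typeDPartition
    split_ifs <;> omega

lemma typeDPartition_eq_and_lt_pred_iff (hP : StrictMono P)
    (hsum : ∀ i j, P i + P j ≠ 2 * n + 3) (hle : ∀ j, P j ≤ 2 * n + 2) (j : Fin m) :
    (typeDPartition n k P j = k ∧
      ∀ i : Fin m, (i : ℕ) + 1 = (j : ℕ) → (k : ℤ) < typeDPartition n k P i) ↔
      P j = n + 1 ∨ P j = n + 2 := by
  constructor
  · rintro ⟨hj, hpred⟩
    have hbelow : ∀ x < j, P x ≤ n := by
      intro x hx
      have hx' : (x : ℕ) < j := hx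
      let i : Fin m := ⟨j - 1, by omega⟩
      have hk := hpred i (by simp only [i]; omega)
      have := hP.monotone (show x ≤ i from Fin.le_def.2 (by simp only [i]; omega))
      have := mt (typeDPartition_le_iff hP hsum hle i).2 (not_le.2 hk)
      omega
    have := card_crossers_le_of_forall_le (n := n) (j := j) hP hbelow
    unfold typeDPartition at hj
    split_ifs at hj <;> omega
  · intro h
    refine ⟨?_, fun i hi => ?_⟩
    · have := card_crossers_self_le hP hsum hle j
      unfold typeDPartition
      split_ifs <;> omega
    · have := hP (Fin.lt_def.2 (by omega) : i < j)
      have := hsum i j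
      unfold typeDPartition
      split_ifs <;> omega

lemma typeDPartition_add_le_iff (hP : StrictMono P) (hsum : ∀ i j, P i + P j ≠ 2 * n + 3)
    (hle : ∀ j, P j ≤ 2 * n + 2) {i j : Fin m} (hij : i < j) :
    typeDPartition n k P i + typeDPartition n k P j ≤ 2 * k - 1 + (j : ℤ) - (i : ℤ) ↔
      2 * n + 3 < P i + P j := by
  have hij' : (i : ℕ) < j := hij
  have := hP hij
  rcases le_or_gt (P j) (n + 1) with hj | hj
  · have := hP.add_sub_le hij.le
    unfold typeDPartition
    split_ifs <;> omega
  rcases le_or_gt (P i) (n + 1) with hi | hi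
  · have := card_crossers_le_add (n := n) (P := P) i j j
    have := card_crossers_le_of_forall_le (n := n) (i := i) (j := j) (b := P i - 1) hP
      fun x hx => by have := hP hx; omega
    have := sub_le_card_crossers_add hP hsum i j
    have := hsum i j
    have := hle j
    unfold typeDPartition
    split_ifs <;> omega
  · have := (typeDPartition_le_iff (k := k) hP hsum hle i).2 (by omega)
    have := (typeDPartition_le_iff (k := k) hP hsum hle j).2 (by omega)
    omega

end

theorem indexSet_partition_translation_typeD_general (n m k : ℕ)
    (hmk : m + k = n + 1)
    (P : Fin m → ℕ) (hmono : StrictMono P)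
    (hrange : ∀ j, 1 ≤ P j ∧ P j ≤ 2 * n + 2)
    (hidx : ∀ i j, P i + P j ≠ 2 * n + 3)
    (lam : Fin m → ℤ)
    (hlam : ∀ j : Fin m, lam j =
      if P j ≤ n + 1 then (n + k + 1 : ℤ) - P j
      else (n + k + 2 : ℤ) - P j +
        ((Finset.univ.filter fun i : Fin m => i < j ∧ 2 * n + 3 < P i + P j).card : ℤ)) :
    ((∀ i j : Fin m, i ≤ j → lam j ≤ lam i) ∧
     (∀ j, 0 ≤ lam j ∧ lam j ≤ (n + k : ℤ)) ∧
     (∀ i j : Fin m, (i : ℕ) + 1 = (j : ℕ) → (k : ℤ) < lam i → lam j < lam i)) ∧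
    (∀ j : Fin m, (lam j ≤ (k : ℤ) ↔ n < P j)) ∧
    (∀ j : Fin m,
      ((lam j = (k : ℤ) ∧ ∀ i : Fin m, (i : ℕ) + 1 = (j : ℕ) → (k : ℤ) < lam i) ↔
        (P j = n + 1 ∨ P j = n + 2))) ∧
    (∀ i j : Fin m, i < j →
      (lam i + lam j ≤ 2 * k - 1 + (j : ℤ) - (i : ℤ) ↔ 2 * n + 3 < P i + P j)) := by
  have hle : ∀ j, P j ≤ 2 * n + 2 := fun j => (hrange j).2
  obtain rfl : lam = typeDPartition n k P := funext hlam
  refine ⟨⟨fun i j hij => typeDPartition_antitone hmono hidx hle hij,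
      fun j => ⟨typeDPartition_nonneg hmono hidx hrange hmk j,
        typeDPartition_le hmono hidx hrange j⟩,
      fun i j hij => typeDPartition_lt_of_lt hmono hidx hle (Fin.lt_def.2 (by omega))⟩,
    typeDPartition_le_iff hmono hidx hle, typeDPartition_eq_and_lt_pred_iff hmono hidx hle,
    fun i j hij => typeDPartition_add_le_iff hmono hidx hle hij⟩

/-- **Translation between index sets and `k`-strict partitions (type D).**
Let `m + k = n + 1`, and let `P' = {p'_1 < ⋯ < p'_m} ⊆ {1,…,2n+2}` with
`p'_i + p'_j ≠ 2n+3`.  Define `λ_j = n+k+1−p'_j` if `p'_j ≤ n+1` and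
`λ_j = n+k+2−p'_j + #{i<j : p'_i+p'_j > 2n+3}` if `p'_j > n+1`.  Then `λ` is a
`k`-strict partition in the `m × (n+k)` rectangle, and: (i) `λ_j ≤ k ↔ p'_j > n`;
(ii) `λ_j = k ∧ (j = 1 ∨ λ_{j−1} > k) ↔ p'_j ∈ {n+1, n+2}`; (iii) for `i < j`,
`λ_i + λ_j ≤ 2k−1+j−i ↔ p'_i + p'_j > 2n+3`. -/
theorem indexSet_partition_translation_typeD (n m k : ℕ) (hm : 1 ≤ m)
    (hmk : m + k = n + 1)
    (P : Fin m → ℕ) (hmono : StrictMono P)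
    (hrange : ∀ j, 1 ≤ P j ∧ P j ≤ 2 * n + 2)
    (hidx : ∀ i j, P i + P j ≠ 2 * n + 3)
    (lam : Fin m → ℤ)
    (hlam : ∀ j : Fin m, lam j =
      if P j ≤ n + 1 then (n + k + 1 : ℤ) - P j
      else (n + k + 2 : ℤ) - P j +
        ((Finset.univ.filter fun i : Fin m => i < j ∧ 2 * n + 3 < P i + P j).card : ℤ)) :
    ((∀ i j : Fin m, i ≤ j → lam j ≤ lam i) ∧
     (∀ j, 0 ≤ lam j ∧ lam j ≤ (n + k : ℤ)) ∧
     (∀ i j : Fin m, (i : ℕ) + 1 = (j : ℕ) → (k : ℤ) < lam i → lam j < lam i)) ∧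
    (∀ j : Fin m, (lam j ≤ (k : ℤ) ↔ n < P j)) ∧
    (∀ j : Fin m,
      ((lam j = (k : ℤ) ∧ ∀ i : Fin m, (i : ℕ) + 1 = (j : ℕ) → (k : ℤ) < lam i) ↔
        (P j = n + 1 ∨ P j = n + 2))) ∧
    (∀ i j : Fin m, i < j →
      (lam i + lam j ≤ 2 * k - 1 + (j : ℤ) - (i : ℤ) ↔ 2 * n + 3 < P i + P j)) :=
  indexSet_partition_translation_typeD_general n m k hmk P hmono hrange hidx lam hlam
end

section
/- Fix integers 1 ≤ k ≤ n and set m = n+1−k. Define a typed k-strict partition to be a pair (λ, t) where λ is a k-strict partition and t ∈ {0,1,2}, subject to: t = 0 if and only if no part of λ equals k (so t ∈ {1,2} exactly when some part of λ equals k). Then the number of typed k-strict partitions (λ, t) with λ contained in an m × (n+k) rectangle equals 2^m · binom(n+1, k). -/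
/-!
Parts larger than `k` are distinct, so removing a largest part `N + 1 > k` from a typed
`k`-strict partition leaves a typed `k`-strict partition bounded by `N`, with one part fewer and
the same type. Hence the number of them in an `m × (k + d)` box satisfies Pascal's recurrence,
and equals `∑ C(d, i) c(j)` over `i + j = m`, where `c(j)` counts those with `j` parts bounded
by `k`. Such a partition has type `0` when no part equals `k` and one of two types otherwise, so
`c(j) = C(j + k - 1, k - 1) + 2 C(j + k - 1, k)`. For `d = n` and `m = n + 1 - k` the trinomial
revision `C(n, i) C(n - i, s) = C(n, s) C(n - s, i)` and the binomial theorem evaluate the sum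
to `2^m (C(n, k - 1) + C(n, k)) = 2^m C(n + 1, k)`.
-/

open Finset

theorem eq_sum_antidiagonal_of_pascal {F : ℕ → ℕ → ℕ} (hzero : ∀ d, F 0 d = F 0 0)
    (hsucc : ∀ m d, F (m + 1) (d + 1) = F (m + 1) d + F m d) (m d : ℕ) :
    F m d = ∑ p ∈ antidiagonal m, d.choose p.1 * F p.2 0 := by
  induction d generalizing m with
  | zero => simp [Finset.Nat.sum_antidiagonal_eq_sum_range_succ_mk, sum_range_succ']
  | succ d ih =>
    cases m with
    | zero => simp [hzero]
    | succ m =>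
      rw [hsucc, ih, ih, Finset.Nat.sum_antidiagonal_succ, Finset.Nat.sum_antidiagonal_succ]
      simp only [Nat.choose_succ_succ', Nat.choose_zero_right, add_mul, sum_add_distrib]
      ring

theorem sum_antidiagonal_choose_mul_choose (m s : ℕ) :
    ∑ p ∈ antidiagonal m, (m + s).choose p.1 * (p.2 + s).choose s =
      2 ^ m * (m + s).choose s := by
  have trinomial : ∀ p ∈ antidiagonal m,
      (m + s).choose p.1 * (p.2 + s).choose s = (m + s).choose s * m.choose p.1 := by
    intro p hp
    rw [HasAntidiagonal.mem_antidiagonal] at hp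
    rw [Nat.choose_symm_of_eq_add (by omega : m + s = p.1 + (p.2 + s)),
      Nat.choose_mul (Nat.le_add_left s p.2), Nat.add_sub_cancel, Nat.add_sub_cancel,
      Nat.choose_symm_of_eq_add hp.symm]
  rw [sum_congr rfl trinomial, ← mul_sum, Finset.Nat.sum_antidiagonal_eq_sum_range_succ_mk,
    Nat.sum_range_choose, mul_comm]

theorem sum_antidiagonal_succ_choose_mul_choose_succ (m s : ℕ) :
    ∑ p ∈ antidiagonal (m + 1), (m + 1 + s).choose p.1 * (p.2 + s).choose (s + 1) =
      2 ^ m * (m + 1 + s).choose (s + 1) := by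
  rw [Finset.Nat.sum_antidiagonal_succ', Nat.choose_eq_zero_of_lt (by omega : 0 + s < s + 1),
    mul_zero, zero_add, show m + 1 + s = m + (s + 1) by ring]
  simpa only [add_assoc, add_comm 1 s] using sum_antidiagonal_choose_mul_choose m (s + 1)

theorem Fin.cons_tail_eq_self_of_eq {α : Type*} {m : ℕ} {f : Fin (m + 1) → α} {a : α}
    (h : f 0 = a) : Fin.cons a (Fin.tail f) = f :=
  h ▸ Fin.cons_self_tail f

theorem antitone_fin_cons_iff {α : Type*} [Preorder α] {m : ℕ} {a : α} {g : Fin m → α} :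
    Antitone (Fin.cons a g : Fin (m + 1) → α) ↔ (∀ i, g i ≤ a) ∧ Antitone g := by
  refine ⟨fun h => ⟨fun i => by simpa using h (Fin.zero_le i.succ),
      fun i j hij => by simpa using h (Fin.succ_le_succ_iff.2 hij)⟩,
    fun ⟨ha, hg⟩ i j hij => ?_⟩
  cases i using Fin.cases <;> cases j using Fin.cases
  all_goals simp_all [Fin.succ_le_succ_iff]
  exact hg hij

namespace TypedKStrict

variable {k m N : ℕ}

def Box (m N : ℕ) : Type := {f : Fin m → ℕ // Antitone f ∧ ∀ i, f i ≤ N}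

/-- Stated for all pairs `i < j` rather than consecutive parts (the same for antitone tuples,
`kStrict_iff_succ`), since this form splits cleanly under `Fin.cons`. -/
def KStrict (k : ℕ) (f : Fin m → ℕ) : Prop := ∀ i j, i < j → k < f i → f j < f i

def IsTyped (k N : ℕ) (p : (Fin m → ℕ) × Fin 3) : Prop :=
  Antitone p.1 ∧ (∀ i, p.1 i ≤ N) ∧ KStrict k p.1 ∧ (p.2 = 0 ↔ ∀ i, p.1 i ≠ k)

abbrev Typed (k m N : ℕ) : Type := {p : (Fin m → ℕ) × Fin 3 // IsTyped k N p}

theorem kStrict_iff_succ {f : Fin m → ℕ} (hf : Antitone f) :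
    KStrict k f ↔ ∀ i j : Fin m, (i : ℕ) + 1 = j → k < f i → f j < f i := by
  refine ⟨fun h i j hij => h i j (Fin.lt_def.2 (by omega)), fun h i j hij hi => ?_⟩
  have hsucc : (i : ℕ) + 1 < m := by omega
  exact (hf (Fin.le_def.2 hij : (⟨i + 1, hsucc⟩ : Fin m) ≤ j)).trans_lt (h i _ rfl hi)

theorem isTyped_iff {p : (Fin m → ℕ) × Fin 3} :
    IsTyped k N p ↔ (∀ i j : Fin m, i ≤ j → p.1 j ≤ p.1 i) ∧ (∀ i, p.1 i ≤ N) ∧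
      (∀ i j : Fin m, (i : ℕ) + 1 = j → k < p.1 i → p.1 j < p.1 i) ∧
      ((p.2 : ℕ) = 0 ↔ ∀ i, p.1 i ≠ k) := by
  refine ⟨fun ⟨hf, hle, hs, ht⟩ =>
      ⟨fun _ _ h => hf h, hle, (kStrict_iff_succ hf).1 hs, ?_⟩,
    fun ⟨hf, hle, hs, ht⟩ =>
      ⟨fun _ _ h => hf _ _ h, hle, (kStrict_iff_succ fun _ _ h => hf _ _ h).2 hs, ?_⟩⟩
  · rwa [Fin.val_eq_zero_iff]
  · rwa [← Fin.val_eq_zero_iff]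

instance : Finite (Box m N) :=
  Finite.of_injective (fun f i => (⟨f.1 i, Nat.lt_succ_of_le (f.2.2 i)⟩ : Fin (N + 1)))
    fun _ _ h => Subtype.ext <| funext fun i => congrArg Fin.val (congrFun h i)

instance : Nonempty (Box m N) := ⟨⟨fun _ => 0, antitone_const, fun _ => N.zero_le⟩⟩

instance : Subsingleton (Box 0 N) := ⟨fun _ _ => Subtype.ext <| Subsingleton.elim _ _⟩

instance : Subsingleton (Box m 0) :=
  ⟨fun f g => Subtype.ext <| funext fun i =>
    (Nat.le_zero.1 (f.2.2 i)).trans (Nat.le_zero.1 (g.2.2 i)).symm⟩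

instance : Finite (Typed k m N) :=
  Finite.of_injective (β := Box m N × Fin 3) (fun p => (⟨p.1.1, p.2.1, p.2.2.1⟩, p.1.2))
    fun _ _ h => Subtype.ext <| Prod.ext (congrArg (·.1.1) h) (congrArg (·.2) h)

theorem forall_le_succ_and_head_ne_iff {f : Fin (m + 1) → ℕ} (hf : Antitone f) :
    (∀ i, f i ≤ N + 1) ∧ f 0 ≠ N + 1 ↔ ∀ i, f i ≤ N := by
  refine ⟨fun ⟨h, h0⟩ i => ?_,
    fun h => ⟨fun i => (h i).trans N.le_succ, ((h 0).trans_lt N.lt_succ_self).ne⟩⟩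
  have := hf (Fin.zero_le i)
  have := h 0
  omega

def boxHeadNeEquiv : {f : Box (m + 1) (N + 1) // f.1 0 ≠ N + 1} ≃ Box (m + 1) N :=
  (Equiv.subtypeSubtypeEquivSubtypeInter (fun f => Antitone f ∧ ∀ i, f i ≤ N + 1)
    (fun f => f 0 ≠ N + 1)).trans <| Equiv.subtypeEquivRight fun _ => by
      rw [and_assoc]
      exact and_congr_right forall_le_succ_and_head_ne_iff

def boxHeadEquiv : Box m (N + 1) ≃ {f : Box (m + 1) (N + 1) // f.1 0 = N + 1} where
  toFun g := ⟨⟨Fin.cons (N + 1) g.1, antitone_fin_cons_iff.2 ⟨g.2.2, g.2.1⟩,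
    Fin.forall_fin_succ.2 ⟨le_rfl, g.2.2⟩⟩, rfl⟩
  invFun f :=
    ⟨Fin.tail f.1.1, fun _ _ h => f.1.2.1 (Fin.succ_le_succ_iff.2 h), fun _ => f.1.2.2 _⟩
  left_inv _ := rfl
  right_inv f := Subtype.ext <| Subtype.ext <| Fin.cons_tail_eq_self_of_eq f.2

theorem card_box_succ_succ :
    Nat.card (Box (m + 1) (N + 1)) = Nat.card (Box (m + 1) N) + Nat.card (Box m (N + 1)) := by
  rw [← Nat.card_congr (Equiv.sumCompl fun f : Box (m + 1) (N + 1) => f.1 0 = N + 1),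
    Nat.card_sum, Nat.card_congr boxHeadNeEquiv, ← Nat.card_congr boxHeadEquiv, add_comm]

theorem card_box : ∀ m N, Nat.card (Box m N) = (m + N).choose N
  | 0, N => by simp [Nat.card_unique]
  | m + 1, 0 => by simp [Nat.card_unique]
  | m + 1, N + 1 => by
    rw [card_box_succ_succ, card_box (m + 1) N, card_box m (N + 1),
      show m + 1 + (N + 1) = m + 1 + N + 1 by ring, Nat.choose_succ_succ', add_right_comm,
      ← add_assoc]

theorem kStrict_cons_iff {a : ℕ} {g : Fin m → ℕ} :
    KStrict k (Fin.cons a g : Fin (m + 1) → ℕ) ↔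
      (k < a → ∀ i, g i < a) ∧ KStrict k g := by
  simp [KStrict, Fin.forall_fin_succ, Fin.succ_pos, imp_forall_iff]

theorem isTyped_cons_iff_of_le (hk : k ≤ N) {g : Fin m → ℕ} {t : Fin 3} :
    IsTyped k (N + 1) (Fin.cons (N + 1) g, t) ↔ IsTyped k N (g, t) := by
  have hk' : N + 1 ≠ k := by omega
  simp only [IsTyped, antitone_fin_cons_iff, kStrict_cons_iff, Fin.forall_fin_succ,
    Fin.cons_zero, Fin.cons_succ, Nat.lt_succ_iff, hk', ne_eq, not_false_eq_true, true_and,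
    le_refl, Nat.lt_succ_of_le hk, true_implies]
  constructor
  · rintro ⟨⟨-, hg⟩, -, ⟨hle, hs⟩, ht⟩
    exact ⟨hg, hle, hs, ht⟩
  · rintro ⟨hg, hle, hs, ht⟩
    have hle' i : g i ≤ N + 1 := (hle i).trans N.le_succ
    exact ⟨⟨hle', hg⟩, hle', ⟨hle, hs⟩, ht⟩

theorem isTyped_cons_self_iff {g : Fin m → ℕ} {t : Fin 3} :
    IsTyped (N + 1) (N + 1) (Fin.cons (N + 1) g, t) ↔
      t ≠ 0 ∧ Antitone g ∧ ∀ i, g i ≤ N + 1 := by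
  simp only [IsTyped, antitone_fin_cons_iff, kStrict_cons_iff, Fin.forall_fin_succ,
    Fin.cons_zero, Fin.cons_succ]
  constructor
  · rintro ⟨⟨hle, hg⟩, -, -, ht⟩
    exact ⟨by simpa using ht, hg, hle⟩
  · rintro ⟨ht, hg, hle⟩
    exact ⟨⟨hle, hg⟩, ⟨le_rfl, hle⟩,
      ⟨by simp, fun i _ _ h => absurd h (hle i).not_gt⟩, by simpa using ht⟩

theorem isTyped_iff_of_lt (h : N < k) {f : Fin m → ℕ} {t : Fin 3} :
    IsTyped k N (f, t) ↔ t = 0 ∧ Antitone f ∧ ∀ i, f i ≤ N := by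
  have hne i (hle : f i ≤ N) : f i ≠ k := (hle.trans_lt h).ne
  constructor
  · rintro ⟨hf, hle, -, ht⟩
    exact ⟨ht.2 fun i => hne i (hle i), hf, hle⟩
  · rintro ⟨rfl, hf, hle⟩
    exact ⟨hf, hle, fun i _ _ hi => absurd hi ((hle i).trans h.le).not_gt,
      by simpa using fun i => hne i (hle i)⟩

def typedHeadNeEquiv : {p : Typed k (m + 1) (N + 1) // p.1.1 0 ≠ N + 1} ≃ Typed k (m + 1) N :=
  (Equiv.subtypeSubtypeEquivSubtypeInter (IsTyped k (N + 1)) (fun p => p.1 0 ≠ N + 1)).trans <|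
    Equiv.subtypeEquivRight fun _ =>
      ⟨fun ⟨⟨hf, hle, hs, ht⟩, h0⟩ =>
          ⟨hf, (forall_le_succ_and_head_ne_iff hf).1 ⟨hle, h0⟩, hs, ht⟩,
        fun ⟨hf, hle, hs, ht⟩ =>
          have h := (forall_le_succ_and_head_ne_iff hf).2 hle
          ⟨⟨hf, h.1, hs, ht⟩, h.2⟩⟩

def typedHeadEquiv (hk : k ≤ N) :
    Typed k m N ≃ {p : Typed k (m + 1) (N + 1) // p.1.1 0 = N + 1} where
  toFun q := ⟨⟨(Fin.cons (N + 1) q.1.1, q.1.2), (isTyped_cons_iff_of_le hk).2 q.2⟩, rfl⟩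
  invFun p := ⟨(Fin.tail p.1.1.1, p.1.1.2),
    (isTyped_cons_iff_of_le hk).1 <| by rw [Fin.cons_tail_eq_self_of_eq p.2]; exact p.1.2⟩
  left_inv _ := rfl
  right_inv p := Subtype.ext <| Subtype.ext <| Prod.ext (Fin.cons_tail_eq_self_of_eq p.2) rfl

def typedHeadEquivOfEq : {t : Fin 3 // t ≠ 0} × Box m (N + 1) ≃
    {p : Typed (N + 1) (m + 1) (N + 1) // p.1.1 0 = N + 1} where
  toFun q :=
    ⟨⟨(Fin.cons (N + 1) q.2.1, q.1.1), isTyped_cons_self_iff.2 ⟨q.1.2, q.2.2⟩⟩, rfl⟩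
  invFun p :=
    have h := isTyped_cons_self_iff.1 <| by rw [Fin.cons_tail_eq_self_of_eq p.2]; exact p.1.2
    (⟨p.1.1.2, h.1⟩, ⟨Fin.tail p.1.1.1, h.2⟩)
  left_inv _ := rfl
  right_inv p := Subtype.ext <| Subtype.ext <| Prod.ext (Fin.cons_tail_eq_self_of_eq p.2) rfl

def typedEquivBoxOfLt (h : N < k) : Typed k m N ≃ Box m N where
  toFun p := ⟨p.1.1, ((isTyped_iff_of_lt h).1 p.2).2⟩
  invFun f := ⟨(f.1, 0), (isTyped_iff_of_lt h).2 ⟨rfl, f.2⟩⟩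
  left_inv p := Subtype.ext <| Prod.ext rfl ((isTyped_iff_of_lt h).1 p.2).1.symm
  right_inv _ := rfl

theorem card_typed_zero : Nat.card (Typed k 0 N) = 1 := by
  have h : ∀ p : Typed k 0 N, p.1 = (Fin.elim0, 0) :=
    fun p => Prod.ext (Subsingleton.elim _ _) (p.2.2.2.2.2 fun i => i.elim0)
  refine Nat.card_eq_one_iff_unique.2
    ⟨⟨fun p q => Subtype.ext ((h p).trans (h q).symm)⟩, ⟨⟨(Fin.elim0, 0), ?_⟩⟩⟩
  simp [IsTyped, KStrict, Subsingleton.antitone]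

theorem card_typed_succ_succ : Nat.card (Typed k (m + 1) (N + 1)) =
    Nat.card (Typed k (m + 1) N) + Nat.card {p : Typed k (m + 1) (N + 1) // p.1.1 0 = N + 1} := by
  rw [← Nat.card_congr (Equiv.sumCompl fun p : Typed k (m + 1) (N + 1) => p.1.1 0 = N + 1),
    Nat.card_sum, Nat.card_congr typedHeadNeEquiv, add_comm]

theorem card_typed_succ_succ_of_le (hk : k ≤ N) : Nat.card (Typed k (m + 1) (N + 1)) =
    Nat.card (Typed k (m + 1) N) + Nat.card (Typed k m N) := by
  rw [card_typed_succ_succ, Nat.card_congr (typedHeadEquiv hk).symm]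

theorem card_typed_add (m d : ℕ) : Nat.card (Typed k m (k + d)) =
    ∑ p ∈ antidiagonal m, d.choose p.1 * Nat.card (Typed k p.2 k) :=
  eq_sum_antidiagonal_of_pascal (F := fun m d => Nat.card (Typed k m (k + d)))
    (fun _ => by simp only [card_typed_zero])
    (fun _ _ => card_typed_succ_succ_of_le (Nat.le_add_right k _)) m d

theorem card_typed_self (K m : ℕ) :
    Nat.card (Typed (K + 1) m (K + 1)) = (m + K).choose K + 2 * (m + K).choose (K + 1) := by
  cases m with
  | zero => simp [card_typed_zero]
  | succ m =>
    rw [card_typed_succ_succ, ← Nat.card_congr typedHeadEquivOfEq,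
      Nat.card_congr (typedEquivBoxOfLt K.lt_succ_self), Nat.card_prod, card_box, card_box]
    simp [add_right_comm, ← add_assoc]

end TypedKStrict

open TypedKStrict in
/-- **Rank of `H^*(OG(n+1−k,2n+2))` as a count of typed `k`-strict partitions.**
With `m = n+1−k`, a typed `k`-strict partition is a pair `(λ, t)` of a `k`-strict
partition `λ` and a type `t ∈ {0,1,2}`, with `t = 0` exactly when no part of `λ`
equals `k`.  The number of typed `k`-strict partitions contained in an
`m × (n+k)` rectangle equals `2^m · binom(n+1,k)`. -/
theorem card_typed_kStrict_partitions (n k : ℕ) (hk₁ : 1 ≤ k) (hk₂ : k ≤ n) :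
    Nat.card {p : (Fin (n + 1 - k) → ℕ) × Fin 3 //
        (∀ i j : Fin (n + 1 - k), i ≤ j → p.1 j ≤ p.1 i) ∧
        (∀ i : Fin (n + 1 - k), p.1 i ≤ n + k) ∧
        (∀ i j : Fin (n + 1 - k), (i : ℕ) + 1 = (j : ℕ) → k < p.1 i → p.1 j < p.1 i) ∧
        ((p.2 : ℕ) = 0 ↔ ∀ i : Fin (n + 1 - k), p.1 i ≠ k)} =
      2 ^ (n + 1 - k) * (n + 1).choose k := by
  obtain ⟨K, rfl⟩ : ∃ K, k = K + 1 := ⟨k - 1, by omega⟩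
  obtain ⟨m, rfl⟩ : ∃ m, n = m + 1 + K := ⟨n - K - 1, by omega⟩
  rw [← Nat.card_congr (Equiv.subtypeEquivRight fun _ => isTyped_iff),
    show m + 1 + K + 1 - (K + 1) = m + 1 by omega,
    show m + 1 + K + (K + 1) = K + 1 + (m + 1 + K) by ring, card_typed_add]
  simp only [card_typed_self, mul_add, sum_add_distrib, mul_left_comm _ 2, ← mul_sum,
    sum_antidiagonal_choose_mul_choose, sum_antidiagonal_succ_choose_mul_choose_succ]
  rw [Nat.choose_succ_succ' (m + 1 + K), pow_succ]
  ring
end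

section
/- Fix integers 0 ≤ k ≤ n and set m = n − k. Let P = {p_1 < ⋯ < p_m} and Q = {q_1 < ⋯ < q_m} be index sets with P → Q, and let λ → μ be the corresponding k-strict partitions. Then for every integer 0 ≤ e ≤ n−1: e ∈ J(P,Q) if and only if the set 𝔸 contains a box in column k+1+e. -/
/-! The fundamental bijection between the set `J(P,Q)` of double crossings and
the columns of the set `𝔸` of boxes, for the Pieri rule on `IG(n-k,2n)`. -/

/-- Number of boxes in column `c` (`1`-indexed) of the partition `lam`. -/
def colCt {m : ℕ} (lam : Fin m → ℕ) (c : ℕ) : ℕ :=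
  (Finset.univ.filter fun j : Fin m => c ≤ lam j).card

/-- The box `b = (row, col)` lies in the skew diagram `mu ∖ lam`. -/
def SkewBox {m : ℕ} (lam mu : Fin m → ℕ) (b : Fin m × ℕ) : Prop :=
  lam b.1 < b.2 ∧ b.2 ≤ mu b.1

/-- The boxes `b`, `b'` (rows `0`-indexed, columns `1`-indexed) are `k`-related. -/
def KRel (k : ℕ) {m : ℕ} (b b' : Fin m × ℕ) : Prop :=
  |(b.2 : ℤ) - k - 1| + ((b.1 : ℕ) + 1) = |(b'.2 : ℤ) - k - 1| + ((b'.1 : ℕ) + 1)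

/-- The Pieri relation `P → Q` on index sets for `IG(n-k,2n)`. -/
def IdxArrow (n : ℕ) {m : ℕ} (P Q : Fin m → ℕ) : Prop :=
  (∀ j, Q j ≤ P j) ∧
  (∀ i j : Fin m, (i : ℕ) + 1 = (j : ℕ) → P i ≤ Q j) ∧
  (∀ i j : Fin m, (i : ℕ) + 1 = (j : ℕ) → P i = Q j →
    ∃ l : Fin m, Q l < 2 * n + 1 - P i ∧ 2 * n + 1 - P i < P l)

/-- The sequence `p_0 = 0, p_1, …, p_m` (as a function of `t ∈ ℕ`). -/
def pExt {m : ℕ} (P : Fin m → ℕ) (t : ℕ) : ℕ :=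
  if h : 1 ≤ t ∧ t ≤ m then P ⟨t - 1, by omega⟩ else 0

/-- The sequence `q_1, …, q_m, q_{m+1} = 2n+1` (as a function of `t ∈ ℕ`). -/
def qExt (n : ℕ) {m : ℕ} (Q : Fin m → ℕ) (t : ℕ) : ℕ :=
  if h : 1 ≤ t ∧ t ≤ m then Q ⟨t - 1, by omega⟩ else 2 * n + 1

/-- `c` is a cut through the diagram `D(P,Q)`: `p_t ≤ c < q_{t+1}` for some
`0 ≤ t ≤ m`, with the conventions `p_0 = 0` and `q_{m+1} = 2n+1`. -/
def IsCut (n : ℕ) {m : ℕ} (P Q : Fin m → ℕ) (c : ℕ) : Prop :=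
  ∃ t : ℕ, t ≤ m ∧ pExt P t ≤ c ∧ c < qExt n Q (t + 1)

/-- A box of `μ ∖ λ` is mentioned in condition (1) or (2) of the Pieri relation. -/
def Mentioned (k : ℕ) {m : ℕ} (lam mu : Fin m → ℕ) (b : Fin m × ℕ) : Prop :=
  (∃ c : ℕ, 1 ≤ c ∧ c ≤ k ∧ colCt mu c = colCt lam c ∧
    ∃ j : Fin m, (j : ℕ) + 1 = colCt mu c ∧ KRel k b (j, c)) ∨
  (∃ c : ℕ, 1 ≤ c ∧ colCt mu c < colCt lam c ∧
    ∃ j : Fin m,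
      ((colCt mu c < (j : ℕ) + 1 ∧ (j : ℕ) + 1 ≤ colCt lam c) ∨
        (j : ℕ) + 1 = colCt mu c) ∧
      KRel k b (j, c))

/-- The set `𝔸`: boxes of `μ ∖ λ` in columns `k+1` through `k+n` not mentioned
in condition (1) or (2). -/
def ASet (n k : ℕ) {m : ℕ} (lam mu : Fin m → ℕ) : Set (Fin m × ℕ) :=
  {b | SkewBox lam mu b ∧ k + 1 ≤ b.2 ∧ b.2 ≤ k + n ∧ ¬Mentioned k lam mu b}

/-!
Write `N_P(v)` for the number of entries of `P` that are at most `v`; then `c` is a cut exactly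
when `N_Q(c) ≤ N_P(c)`. Row `j` of `λ` reaches column `k+1+e` iff `p_j ≤ n-e`, so `𝔸` can meet
that column only in row `N_P(n-e)`, and this box lies in `μ ∖ λ` iff `n-e` is a crossing.
Because `P` contains no complementary pair, `(n-d, n+d]` holds at most `d` entries of `P`; hence
the rows `p_j ≤ n+e` of `λ` have length at least `L = k - e + N_P(n+e) - N_P(n-e)` and the others
at most `L`, and likewise for `μ`. The box is `k`-related to the box in row `N_P(n+e)` and
column `L`, which is mentioned in (1) or (2) when `n+e` is a cut; when `n+e` is a crossing, the
two separations show that no column `c ≤ k` of `λ` and `μ` brackets a row `k`-related to the box.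
-/

open Finset

structure IsIndexSet_s16 (n : ℕ) {m : ℕ} (P : Fin m → ℕ) : Prop where
  strictMono : StrictMono P
  one_le : ∀ j, 1 ≤ P j
  le_two_mul : ∀ j, P j ≤ 2 * n
  add_ne : ∀ i j, P i + P j ≠ 2 * n + 1

section Counting

variable {m : ℕ} (P : Fin m → ℕ)

def numLE (v : ℕ) : ℕ := #{j | P j ≤ v}

lemma numLE_mono : Monotone (numLE P) := fun _ _ h =>
  card_le_card (monotone_filter_right _ fun _ _ hj => le_trans hj h)

lemma numLE_le_card (v : ℕ) : numLE P v ≤ m :=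
  (card_filter_le _ _).trans_eq (card_fin m)

lemma numLE_eq_card {v : ℕ} (h : ∀ j, P j ≤ v) : numLE P v = m := by
  simp [numLE, h]

lemma numLE_eq_zero {v : ℕ} (h : ∀ j, v < P j) : numLE P v = 0 := by
  simp [numLE, h]

lemma numLE_add_card_Ioc {a b : ℕ} (hab : a ≤ b) :
    numLE P a + #{j | a < P j ∧ P j ≤ b} = numLE P b := by
  rw [numLE, numLE, ← card_union_of_disjoint (disjoint_filter.2 fun _ _ h h' => by omega)]
  congr 1
  ext j
  simp only [mem_union, mem_filter, mem_univ, true_and]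
  omega

variable {P}

lemma numLE_le_numLE_of_le {Q : Fin m → ℕ} (h : ∀ j, Q j ≤ P j) (v : ℕ) :
    numLE P v ≤ numLE Q v :=
  card_le_card (monotone_filter_right _ fun j _ hj => le_trans (h j) hj)

lemma StrictMono.le_iff_lt_numLE (hP : StrictMono P) (v : ℕ) (j : Fin m) :
    P j ≤ v ↔ (j : ℕ) < numLE P v := by
  constructor
  · intro h
    have hsub : Iic j ⊆ ({i | P i ≤ v} : Finset (Fin m)) := fun i hi =>
      mem_filter.2 ⟨mem_univ _, le_trans (hP.monotone (mem_Iic.1 hi)) h⟩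
    have := card_le_card hsub
    rw [Fin.card_Iic] at this
    exact this
  · intro h
    by_contra! hc
    have hsub : ({i | P i ≤ v} : Finset (Fin m)) ⊆ Iio j := fun i hi =>
      mem_Iio.2 (hP.lt_iff_lt.1 (lt_of_le_of_lt (mem_filter.1 hi).2 hc))
    have := card_le_card hsub
    simp only [Fin.card_Iio] at this
    exact absurd h (not_lt.2 this)

lemma numLE_le_numLE_add_one {Q : Fin m → ℕ} (hP : StrictMono P) (hQ : StrictMono Q)
    (h : ∀ i j : Fin m, (i : ℕ) + 1 = j → P i ≤ Q j) (v : ℕ) :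
    numLE Q v ≤ numLE P v + 1 := by
  by_contra! hlt
  have hm : numLE P v + 1 < m := lt_of_lt_of_le hlt (numLE_le_card Q v)
  have hQv := (hQ.le_iff_lt_numLE v ⟨_, hm⟩).2 hlt
  have hPv := (hP.le_iff_lt_numLE v ⟨numLE P v, by omega⟩).1
    (le_trans (h _ ⟨_, hm⟩ rfl) hQv)
  exact lt_irrefl _ hPv

/-- The entries of `P` in `(n-d, n-e] ∪ (n+e, n+d]` have pairwise distinct distances from
`n + 1/2`, since `P` contains no complementary pair. -/
lemma numLE_annulus_le {n : ℕ} (hP : Function.Injective P)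
    (hsymm : ∀ i j, P i + P j ≠ 2 * n + 1) {e d : ℕ} (hed : e ≤ d) (hdn : d ≤ n) :
    numLE P (n + d) + numLE P (n - e) ≤ numLE P (n + e) + numLE P (n - d) + (d - e) := by
  rw [← numLE_add_card_Ioc P (show n + e ≤ n + d by omega),
    ← numLE_add_card_Ioc P (show n - d ≤ n - e by omega)]
  set S := univ.filter (fun j => n + e < P j ∧ P j ≤ n + d) ∪
    univ.filter (fun j => n - d < P j ∧ P j ≤ n - e)
  let dist : Fin m → ℕ := fun j => if P j ≤ n then n + 1 - P j else P j - n
  have hmaps : ∀ j ∈ S, dist j ∈ Icc (e + 1) d := by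
    intro j hj
    simp only [S, mem_union, mem_filter, mem_univ, true_and] at hj
    simp only [dist, mem_Icc]
    split <;> omega
  have hinj : Set.InjOn dist S := by
    intro i hi j hj hij
    simp only [S, mem_coe, mem_union, mem_filter, mem_univ, true_and] at hi hj
    have := hsymm i j
    refine hP ?_
    simp only [dist] at hij
    split at hij <;> split at hij <;> omega
  have hcard := card_le_card_of_injOn dist hmaps hinj
  rw [card_union_of_disjoint (disjoint_filter.2 fun _ _ h h' => by omega)] at hcard
  simp only [Nat.card_Icc] at hcard
  omega

lemma numLE_le_numLE_add {n : ℕ} (hP : IsIndexSet_s16 n P) {e : ℕ} (he : e ≤ n) :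
    numLE P (n + e) ≤ numLE P (n - e) + e := by
  have := numLE_annulus_le hP.strictMono.injective hP.add_ne (Nat.zero_le e) he
  simp only [add_zero, Nat.sub_zero] at this
  omega

lemma add_numLE_le_numLE_add {n k : ℕ} (hP : IsIndexSet_s16 n P) (hmk : m + k = n) {e : ℕ}
    (he : e ≤ n) :
    e + numLE P (n - e) ≤ numLE P (n + e) + k := by
  have := numLE_annulus_le hP.strictMono.injective hP.add_ne he le_rfl
  rw [numLE_eq_card P (v := n + n) fun j => by have := hP.le_two_mul j; omega,
    numLE_eq_zero P (v := n - n) fun j => by have := hP.one_le j; omega] at this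
  omega

lemma isCut_iff {n : ℕ} {Q : Fin m → ℕ} (hP : StrictMono P) (hQ : StrictMono Q) {c : ℕ}
    (hc : c ≤ 2 * n) : IsCut n P Q c ↔ numLE Q c ≤ numLE P c := by
  constructor
  · rintro ⟨t, htm, hp, hq⟩
    have hQc : numLE Q c ≤ t := by
      by_contra! hlt
      have ht : t < m := lt_of_lt_of_le hlt (numLE_le_card Q c)
      rw [qExt, dif_pos (by omega)] at hq
      exact absurd ((hQ.le_iff_lt_numLE c ⟨t, ht⟩).2 hlt) (by simpa using hq)
    have hPc : t ≤ numLE P c := by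
      rcases Nat.eq_zero_or_pos t with rfl | ht
      · exact Nat.zero_le _
      · rw [pExt, dif_pos (by omega)] at hp
        have := (hP.le_iff_lt_numLE c _).1 hp
        simp only at this
        omega
    omega
  · intro h
    have hle := numLE_le_card P c
    refine ⟨numLE P c, hle, ?_, ?_⟩
    · unfold pExt
      split_ifs with h0
      · exact (hP.le_iff_lt_numLE c _).2 (by simp only; omega)
      · exact Nat.zero_le c
    · unfold qExt
      split_ifs with h1
      · by_contra! hq
        have := (hQ.le_iff_lt_numLE c _).1 hq
        simp only [Nat.add_sub_cancel] at this
        omega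
      · omega

end Counting

def kStrict (n k : ℕ) {m : ℕ} (P : Fin m → ℕ) (j : Fin m) : ℤ :=
  (n + k + 1 : ℤ) - P j +
    ((Finset.univ.filter fun i : Fin m => i < j ∧ 2 * n + 1 < P i + P j).card : ℤ)

section KStrict

variable {n k m : ℕ} {P : Fin m → ℕ}

lemma kStrict_of_le (hP : StrictMono P) {j : Fin m} (hj : P j ≤ n) :
    kStrict n k P j = n + k + 1 - P j := by
  have hempty : ({i | i < j ∧ 2 * n + 1 < P i + P j} : Finset (Fin m)) = ∅ :=
    filter_eq_empty_iff.2 fun i _ ⟨hij, hsum⟩ => by have := hP hij; omega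
  simp [kStrict, hempty]

lemma kStrict_of_gt (hP : StrictMono P) {j : Fin m} {d : ℕ} (hj : P j = n + 1 + d)
    (hd : d ≤ n) : kStrict n k P j = k - d + (numLE P (n + d) - numLE P (n - d) : ℤ) := by
  have hpairs : ({i | i < j ∧ 2 * n + 1 < P i + P j} : Finset (Fin m)) =
      ({i | n - d < P i ∧ P i ≤ n + d} : Finset (Fin m)) := by
    ext i
    simp only [mem_filter, mem_univ, true_and, ← hP.lt_iff_lt]
    omega
  have hsplit := numLE_add_card_Ioc P (show n - d ≤ n + d by omega)
  rw [kStrict, hpairs, hj]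
  push_cast
  omega

lemma kStrict_le_of_lt (hP : IsIndexSet_s16 n P) {e : ℕ} {j : Fin m} (hj : n + e < P j) :
    kStrict n k P j ≤ k - e + (numLE P (n + e) - numLE P (n - e) : ℤ) := by
  obtain ⟨d, hd⟩ : ∃ d, P j = n + 1 + d := ⟨P j - n - 1, by omega⟩
  have hdn : d < n := by have := hP.le_two_mul j; omega
  have := numLE_annulus_le hP.strictMono.injective hP.add_ne (show e ≤ d by omega) hdn.le
  rw [kStrict_of_gt hP.strictMono hd hdn.le]
  omega

lemma le_kStrict_of_le (hP : IsIndexSet_s16 n P) {e : ℕ} (he : e ≤ n) {j : Fin m}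
    (hj : P j ≤ n + e) :
    k - e + (numLE P (n + e) - numLE P (n - e) : ℤ) ≤ kStrict n k P j := by
  by_cases hjn : P j ≤ n
  · have := numLE_le_numLE_add hP he
    rw [kStrict_of_le hP.strictMono hjn]
    omega
  · obtain ⟨d, hd⟩ : ∃ d, P j = n + 1 + d := ⟨P j - n - 1, by omega⟩
    have := numLE_annulus_le hP.strictMono.injective hP.add_ne (show d ≤ e by omega) he
    rw [kStrict_of_gt hP.strictMono hd (by omega)]
    omega

lemma le_kStrict_iff_of_lt (hP : IsIndexSet_s16 n P) {c : ℕ} (hc : k < c) (j : Fin m) :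
    c ≤ kStrict n k P j ↔ P j + c ≤ n + k + 1 := by
  by_cases hjn : P j ≤ n
  · rw [kStrict_of_le hP.strictMono hjn]
    omega
  · have := kStrict_le_of_lt (k := k) hP (e := 0) (j := j) (by omega)
    simp only [add_zero, Nat.sub_zero, sub_self] at this
    omega

lemma numLE_le_colCt (hP : IsIndexSet_s16 n P) {lam : Fin m → ℕ}
    (hlam : ∀ j, (lam j : ℤ) = kStrict n k P j) {e c : ℕ} (he : e ≤ n)
    (hc : (c : ℤ) ≤ k - e + (numLE P (n + e) - numLE P (n - e) : ℤ)) :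
    numLE P (n + e) ≤ colCt lam c :=
  card_le_card <| monotone_filter_right _ fun j _ hj => by
    have := le_kStrict_of_le (k := k) hP he hj
    have := hlam j
    omega

lemma colCt_le_numLE (hP : IsIndexSet_s16 n P) {lam : Fin m → ℕ}
    (hlam : ∀ j, (lam j : ℤ) = kStrict n k P j) {e c : ℕ}
    (hc : k - e + (numLE P (n + e) - numLE P (n - e) : ℤ) < c) :
    colCt lam c ≤ numLE P (n + e) :=
  card_le_card <| monotone_filter_right _ fun j _ hj => by
    by_contra! hlt
    have := kStrict_le_of_lt (k := k) hP hlt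
    have := hlam j
    omega

lemma colCt_le_colCt_of_lt {Q : Fin m → ℕ} (hP : IsIndexSet_s16 n P) (hQ : IsIndexSet_s16 n Q)
    (hQP : ∀ j, Q j ≤ P j) {lam mu : Fin m → ℕ} (hlam : ∀ j, (lam j : ℤ) = kStrict n k P j)
    (hmu : ∀ j, (mu j : ℤ) = kStrict n k Q j) {c : ℕ} (hc : k < c) :
    colCt lam c ≤ colCt mu c :=
  card_le_card <| monotone_filter_right _ fun j _ hj => by
    have hPj := (le_kStrict_iff_of_lt hP hc j).1 (by rw [← hlam]; exact_mod_cast hj)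
    have := (le_kStrict_iff_of_lt hQ hc j).2 (by have := hQP j; omega)
    have := hmu j
    omega

end KStrict

lemma kRel_iff {k m c : ℕ} (hc : c ≤ k) (r j : Fin m) (e : ℕ) :
    KRel k (r, k + 1 + e) (j, c) ↔ (r : ℕ) + e + c = j + k + 1 := by
  simp only [KRel]
  rw [show ((k + 1 + e : ℕ) : ℤ) - k - 1 = e by push_cast; ring,
    abs_of_nonneg (by positivity), abs_of_nonpos (by omega)]
  omega

lemma mentioned_iff_of_colCt_le {k m : ℕ} {lam mu : Fin m → ℕ}
    (hcol : ∀ c, k < c → colCt lam c ≤ colCt mu c) (b : Fin m × ℕ) :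
    Mentioned k lam mu b ↔ ∃ c, 1 ≤ c ∧ c ≤ k ∧ ∃ j : Fin m,
      colCt mu c ≤ j + 1 ∧ j + 1 ≤ colCt lam c ∧ KRel k b (j, c) := by
  constructor
  · rintro (⟨c, hc1, hck, heq, j, hj, hrel⟩ | ⟨c, hc1, hlt, j, hj, hrel⟩)
    · exact ⟨c, hc1, hck, j, by omega, by omega, hrel⟩
    · have hck : c ≤ k := by
        by_contra! h
        exact absurd (hcol c h) (not_le.2 hlt)
      exact ⟨c, hc1, hck, j, by omega, by omega, hrel⟩
  · rintro ⟨c, hc1, hck, j, hmu, hlam, hrel⟩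
    by_cases heq : colCt mu c = colCt lam c
    · exact Or.inl ⟨c, hc1, hck, heq, j, by omega, hrel⟩
    · exact Or.inr ⟨c, hc1, by omega, j, by omega, hrel⟩

section Bijection

variable {n k m : ℕ} {P Q lam mu : Fin m → ℕ}

lemma not_mentioned_of_crossing (hP : IsIndexSet_s16 n P) (hQ : IsIndexSet_s16 n Q)
    (harrow : IdxArrow n P Q) (hlam : ∀ j, (lam j : ℤ) = kStrict n k P j)
    (hmu : ∀ j, (mu j : ℤ) = kStrict n k Q j) {e : ℕ} (he : e ≤ n)
    (hcross : numLE P (n + e) < numLE Q (n + e)) (r : Fin m)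
    (hr : (r : ℕ) = numLE P (n - e)) :
    ¬Mentioned k lam mu (r, k + 1 + e) := by
  rw [mentioned_iff_of_colCt_le fun c hc => colCt_le_colCt_of_lt hP hQ harrow.1 hlam hmu hc]
  rintro ⟨c, -, hck, j, hmu_le, hle_lam, hrel⟩
  rw [kRel_iff hck] at hrel
  have := numLE_le_numLE_add_one hP.strictMono hQ.strictMono harrow.2.1 (n - e)
  rcases le_or_gt ((j : ℕ) + 1) (numLE P (n + e)) with hj | hj
  · have := numLE_le_colCt hQ hmu he (c := c) (by omega)
    omega
  · have := colCt_le_numLE hP hlam (e := e) (c := c) (by omega)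
    omega

lemma exists_mem_ASet_of_crossing (hP : IsIndexSet_s16 n P) (hQ : IsIndexSet_s16 n Q)
    (harrow : IdxArrow n P Q) (hlam : ∀ j, (lam j : ℤ) = kStrict n k P j)
    (hmu : ∀ j, (mu j : ℤ) = kStrict n k Q j) {e : ℕ} (he : e < n)
    (hcross₁ : numLE P (n - e) < numLE Q (n - e))
    (hcross₂ : numLE P (n + e) < numLE Q (n + e)) :
    ∃ b ∈ ASet n k lam mu, b.2 = k + 1 + e := by
  let r : Fin m := ⟨numLE P (n - e), hcross₁.trans_le (numLE_le_card Q _)⟩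
  have hPr : ¬P r ≤ n - e := by
    rw [hP.strictMono.le_iff_lt_numLE]
    exact lt_irrefl _
  have hQr : Q r ≤ n - e := (hQ.strictMono.le_iff_lt_numLE _ r).2 hcross₁
  have hlam_r := le_kStrict_iff_of_lt hP (k := k) (c := k + 1 + e) (by omega) r
  have hmu_r := le_kStrict_iff_of_lt hQ (k := k) (c := k + 1 + e) (by omega) r
  refine ⟨(r, k + 1 + e), ?_, rfl⟩
  refine ⟨⟨?_, ?_⟩, le_add_right le_rfl, by simp only; omega,
    not_mentioned_of_crossing hP hQ harrow hlam hmu he.le hcross₂ r rfl⟩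
  · have := hlam r
    simp only
    omega
  · have := hmu r
    simp only
    omega

lemma crossing_of_mem_ASet (hmk : m + k = n) (hP : IsIndexSet_s16 n P) (hQ : IsIndexSet_s16 n Q)
    (harrow : IdxArrow n P Q) (hlam : ∀ j, (lam j : ℤ) = kStrict n k P j)
    (hmu : ∀ j, (mu j : ℤ) = kStrict n k Q j) {e : ℕ} (he : e < n) {r : Fin m}
    (hb : (r, k + 1 + e) ∈ ASet n k lam mu) :
    numLE P (n - e) < numLE Q (n - e) ∧ numLE P (n + e) < numLE Q (n + e) := by
  obtain ⟨⟨hlam_lt, hle_mu⟩, -, -, hnot⟩ := hb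
  simp only at hlam_lt hle_mu
  have hPr : numLE P (n - e) ≤ r := by
    rw [← not_lt, ← hP.strictMono.le_iff_lt_numLE]
    have := le_kStrict_iff_of_lt hP (k := k) (c := k + 1 + e) (by omega) r
    have := hlam r
    omega
  have hQr : r < numLE Q (n - e) := by
    rw [← hQ.strictMono.le_iff_lt_numLE]
    have := le_kStrict_iff_of_lt hQ (k := k) (c := k + 1 + e) (by omega) r
    have := hmu r
    omega
  have := numLE_le_numLE_add_one hP.strictMono hQ.strictMono harrow.2.1 (n - e)
  refine ⟨by omega, ?_⟩
  by_contra! hcut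
  set t := numLE P (n + e) with ht
  have htQ : numLE Q (n + e) = t := le_antisymm hcut (numLE_le_numLE_of_le harrow.1 _)
  have := numLE_mono Q (show n - e ≤ n + e by omega)
  have := add_numLE_le_numLE_add hQ hmk he.le
  have := numLE_le_numLE_add hP he.le
  have := numLE_le_card P (n + e)
  -- the witness is the box in row `t` and column `L = k - e + N_P(n+e) - N_P(n-e)` of the header
  apply hnot
  rw [mentioned_iff_of_colCt_le fun c hc => colCt_le_colCt_of_lt hP hQ harrow.1 hlam hmu hc]
  refine ⟨k + t - e - r, by omega, by omega, ⟨t - 1, by omega⟩, ?_, ?_,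
    (kRel_iff (by omega) _ _ _).2 (by simp only; omega)⟩
  · have := colCt_le_numLE hQ hmu (e := e) (c := k + t - e - r) (by omega)
    simp only
    omega
  · have := numLE_le_colCt hP hlam he.le (c := k + t - e - r) (by omega)
    simp only
    omega

end Bijection

/-- **The fundamental bijection:** if `P → Q` are index sets for `IG(n−k,2n)`
with associated `k`-strict partitions `λ → μ`, then for `0 ≤ e ≤ n−1` one has
`e ∈ J(P,Q)` (i.e. `n−e` and `n+e` are both crossings) if and only if the set
`𝔸` contains a box in column `k+1+e`. -/
theorem mem_J_iff_ASet_box (n m k : ℕ) (hmk : m + k = n)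
    (P Q : Fin m → ℕ)
    (hPmono : StrictMono P) (hPrange : ∀ j, 1 ≤ P j ∧ P j ≤ 2 * n)
    (hPidx : ∀ i j, P i + P j ≠ 2 * n + 1)
    (hQmono : StrictMono Q) (hQrange : ∀ j, 1 ≤ Q j ∧ Q j ≤ 2 * n)
    (hQidx : ∀ i j, Q i + Q j ≠ 2 * n + 1)
    (harrow : IdxArrow n P Q)
    (lam mu : Fin m → ℕ)
    (hlam : ∀ j : Fin m, (lam j : ℤ) = (n + k + 1 : ℤ) - P j +
      ((Finset.univ.filter fun i : Fin m => i < j ∧ 2 * n + 1 < P i + P j).card : ℤ))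
    (hmu : ∀ j : Fin m, (mu j : ℤ) = (n + k + 1 : ℤ) - Q j +
      ((Finset.univ.filter fun i : Fin m => i < j ∧ 2 * n + 1 < Q i + Q j).card : ℤ))
    (e : ℕ) (he : e + 1 ≤ n) :
    ((¬IsCut n P Q (n - e)) ∧ (¬IsCut n P Q (n + e))) ↔
      ∃ b ∈ ASet n k lam mu, b.2 = k + 1 + e := by
  have hP : IsIndexSet_s16 n P :=
    ⟨hPmono, fun j => (hPrange j).1, fun j => (hPrange j).2, hPidx⟩
  have hQ : IsIndexSet_s16 n Q :=
    ⟨hQmono, fun j => (hQrange j).1, fun j => (hQrange j).2, hQidx⟩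
  rw [isCut_iff hPmono hQmono (by omega), isCut_iff hPmono hQmono (by omega), not_le, not_le]
  constructor
  · rintro ⟨hcross₁, hcross₂⟩
    exact exists_mem_ASet_of_crossing hP hQ harrow hlam hmu (by omega) hcross₁ hcross₂
  · rintro ⟨⟨r, c⟩, hb, rfl⟩
    exact crossing_of_mem_ASet hmk hP hQ harrow hlam hmu (by omega) hb
end
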